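/- arXiv:2109.12749 — 10 statements merged into one kernel-verified Lean document; each statement's English description precedes it below -/
import Mathlib

section
/- Let F be a finite field with exactly q elements, E a field extension of F, and α ∈ E not in the image of the algebra map F → E. If the intermediate field F(α) generated by α satisfies [F(α) : F] = 2, then the set S_α has exactly q² − q elements; if [F(α) : F] > 2, then S_α has exactly q³ − q elements. -/
/-- The set `S_α = {(aα+b)/(cα+d) : a,b,c,d ∈ F, ad ≠ bc}`, the orbit of `α`
under the Möbius action of `PGL(2,F)`. -/
def Sset (F : Type*) {E : Type*} [Field F] [Field E] [Algebra F E] (α : E) : Set E :=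
  {x | ∃ a b c d : F, a * d ≠ b * c ∧
    x = (algebraMap F E a * α + algebraMap F E b) / (algebraMap F E c * α + algebraMap F E d)}

/-!
Write `φ = algebraMap F E`. Every `(aα + b)/(cα + d)` can be normalised to `uα + v` with `u ≠ 0`
when `c = 0`, and to `a + w/(α + d)` with `w ≠ 0` when `c ≠ 0`. Since `α ∉ φ(F)`, the elements
`1, α` are linearly independent, so the first family has exactly `(q - 1)q` members. If
`[F(α) : F] = 2` they already fill `F(α) \ F`, which has `q² - q` elements and contains `S_α`.
If `[F(α) : F] > 2`, the elements `1, α, α²` are independent too; clearing denominators then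
shows that the second family is injectively parametrised by `F × Fˣ × F` and disjoint from
the first, giving `(q - 1)q + q(q - 1)q = q³ - q`.
-/

open Module Polynomial IntermediateField

section Independence

variable {F E : Type*} [Field F] [Field E] [Algebra F E] {α : E}

theorem eq_zero_of_algebraMap_mul_add_eq_zero (hα : α ∉ Set.range (algebraMap F E)) {u v : F}
    (h : algebraMap F E u * α + algebraMap F E v = 0) : u = 0 ∧ v = 0 := by
  obtain rfl | hu := eq_or_ne u 0
  · simpa using h
  · refine absurd ⟨-v / u, ?_⟩ hα
    rw [map_div₀, map_neg, div_eq_iff (by simpa using hu)]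
    linear_combination -h

theorem algebraMap_mul_add_ne_zero (hα : α ∉ Set.range (algebraMap F E)) {c d : F}
    (h : c ≠ 0 ∨ d ≠ 0) : algebraMap F E c * α + algebraMap F E d ≠ 0 := fun h0 => by
  obtain ⟨rfl, rfl⟩ := eq_zero_of_algebraMap_mul_add_eq_zero hα h0
  simp at h

theorem add_algebraMap_ne_zero (hα : α ∉ Set.range (algebraMap F E)) (d : F) :
    α + algebraMap F E d ≠ 0 := fun h =>
  hα ⟨-d, by rw [map_neg]; linear_combination -h⟩

theorem eq_zero_of_algebraMap_quadratic_eq_zero (h3 : 2 < finrank F F⟮α⟯) {c₂ c₁ c₀ : F}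
    (h : algebraMap F E c₂ * α ^ 2 + algebraMap F E c₁ * α + algebraMap F E c₀ = 0) :
    c₂ = 0 ∧ c₁ = 0 ∧ c₀ = 0 := by
  have : FiniteDimensional F F⟮α⟯ := .of_finrank_pos (by omega)
  have hint : IsIntegral F α := (AdjoinSimple.isIntegral_gen F α).mp (.of_finite F _)
  set p : F[X] := C c₂ * X ^ 2 + C c₁ * X + C c₀
  have hp : p = 0 := by
    by_contra hp
    have hdeg := natDegree_le_natDegree <|
      minpoly.degree_le_of_ne_zero F α hp (by simpa [p, Algebra.smul_def] using h)
    have : p.natDegree ≤ 2 := by simp only [p]; compute_degree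
    rw [← adjoin.finrank hint] at hdeg
    omega
  refine ⟨?_, ?_, ?_⟩
  · simpa [p] using congrArg (coeff · 2) hp
  · simpa [p] using congrArg (coeff · 1) hp
  · simpa [p] using congrArg (coeff · 0) hp

end Independence

namespace Sset

variable (F : Type*) {E : Type*} [Field F] [Field E] [Algebra F E] (α : E)

def affine (p : Fˣ × F) : E :=
  algebraMap F E p.1 * α + algebraMap F E p.2

/-- For `c ≠ 0`: `(aα + b)/(cα + d) = a/c + ((bc - ad)/c²)/(α + d/c)`. -/
def translateInv (p : F × Fˣ × F) : E :=
  algebraMap F E p.1 + algebraMap F E p.2.1 / (α + algebraMap F E p.2.2)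

variable {F α}

theorem range_affine_subset : Set.range (affine F α) ⊆ Sset F α := by
  rintro _ ⟨⟨u, v⟩, rfl⟩
  exact ⟨u, v, 0, 1, by simp, by simp [affine]⟩

theorem affine_injective (hα : α ∉ Set.range (algebraMap F E)) :
    Function.Injective (affine F α) := by
  rintro ⟨u, v⟩ ⟨u', v'⟩ h
  simp only [affine] at h
  obtain ⟨hu, hv⟩ := eq_zero_of_algebraMap_mul_add_eq_zero (u := u - u') (v := v - v') hα <| by
    simp only [map_sub]
    linear_combination h
  simp only [Prod.mk.injEq, Units.ext_iff]
  exact ⟨sub_eq_zero.mp hu, sub_eq_zero.mp hv⟩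

theorem subset_adjoin_sdiff_range (hα : α ∉ Set.range (algebraMap F E)) :
    Sset F α ⊆ (F⟮α⟯ : Set E) \ Set.range (algebraMap F E) := by
  rintro _ ⟨a, b, c, d, hne, rfl⟩
  have hmem (c e : F) : algebraMap F E c * α + algebraMap F E e ∈ F⟮α⟯ :=
    add_mem (mul_mem (IntermediateField.algebraMap_mem _ c) (mem_adjoin_simple_self F α))
      (IntermediateField.algebraMap_mem _ e)
  refine ⟨div_mem (hmem a b) (hmem c d), ?_⟩
  rintro ⟨t, ht⟩
  have hden := algebraMap_mul_add_ne_zero hα (c := c) (d := d) (by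
    contrapose! hne
    simp [hne])
  rw [eq_comm, div_eq_iff hden] at ht
  obtain ⟨h₁, h₂⟩ :=
      eq_zero_of_algebraMap_mul_add_eq_zero (u := a - t * c) (v := b - t * d) hα <| by
    simp only [map_sub, map_mul]
    linear_combination ht
  apply hne
  rw [sub_eq_zero.mp h₁, sub_eq_zero.mp h₂]
  ring

theorem ncard_of_finrank_eq_two [Finite F] (hα : α ∉ Set.range (algebraMap F E))
    (h2 : finrank F F⟮α⟯ = 2) : (Sset F α).ncard = Nat.card F ^ 2 - Nat.card F := by
  have : FiniteDimensional F F⟮α⟯ := .of_finrank_pos (by omega)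
  have : Finite F⟮α⟯ := Module.finite_of_finite F
  have hrange : Set.range (algebraMap F E) ⊆ (F⟮α⟯ : Set E) :=
    Set.range_subset_iff.mpr (IntermediateField.algebraMap_mem _)
  have hupper : (Sset F α).ncard ≤ Nat.card F ^ 2 - Nat.card F := by
    calc (Sset F α).ncard ≤ ((F⟮α⟯ : Set E) \ Set.range (algebraMap F E)).ncard :=
          Set.ncard_le_ncard (subset_adjoin_sdiff_range hα)
      _ = Nat.card F ^ 2 - Nat.card F := by
          rw [Set.ncard_sdiff hrange, Set.ncard_range_of_injective (algebraMap F E).injective,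
            ← Nat.card_coe_set_eq, SetLike.coe_sort_coe, natCard_eq_pow_finrank (K := F), h2]
  have hlower : Nat.card F ^ 2 - Nat.card F ≤ (Sset F α).ncard := by
    calc Nat.card F ^ 2 - Nat.card F = (Set.range (affine F α)).ncard := by
          rw [Set.ncard_range_of_injective (affine_injective hα), Nat.card_prod, Nat.card_units,
            tsub_mul, one_mul, sq]
      _ ≤ (Sset F α).ncard := Set.ncard_le_ncard range_affine_subset
          ((Set.toFinite _).subset ((subset_adjoin_sdiff_range hα).trans Set.sdiff_subset))
  exact le_antisymm hupper hlower

theorem eq_range_affine_union_range_translateInv (hα : α ∉ Set.range (algebraMap F E)) :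
    Sset F α = Set.range (affine F α) ∪ Set.range (translateInv F α) := by
  have hden := add_algebraMap_ne_zero hα
  refine subset_antisymm ?_ (Set.union_subset range_affine_subset ?_)
  · rintro _ ⟨a, b, c, d, hne, rfl⟩
    obtain rfl | hc := eq_or_ne c 0
    · have hd : d ≠ 0 := by rintro rfl; simp at hne
      have ha : a ≠ 0 := by rintro rfl; simp at hne
      refine .inl ⟨(Units.mk0 (a / d) (div_ne_zero ha hd), b / d), ?_⟩
      simp only [affine, Units.val_mk0, map_div₀, map_zero, zero_mul, zero_add]
      field_simp
    · have hw : (b * c - a * d) / c ^ 2 ≠ 0 :=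
        div_ne_zero (sub_ne_zero.mpr (Ne.symm hne)) (pow_ne_zero 2 hc)
      refine .inr ⟨(a / c, Units.mk0 _ hw, d / c), ?_⟩
      have hc' : algebraMap F E c ≠ 0 := by simpa using hc
      have hcd := algebraMap_mul_add_ne_zero hα (d := d) (.inl hc)
      simp only [translateInv, Units.val_mk0, map_div₀, map_sub, map_mul, map_pow]
      field_simp
      ring
  · rintro _ ⟨⟨a, w, d⟩, rfl⟩
    refine ⟨a, a * d + w, 1, d, fun h => w.ne_zero (by linear_combination -h), ?_⟩
    simp only [translateInv, map_add, map_mul, map_one, one_mul]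
    field_simp [hden d]
    ring

theorem translateInv_injective (hα : α ∉ Set.range (algebraMap F E))
    (h3 : 2 < finrank F F⟮α⟯) : Function.Injective (translateInv F α) := by
  rintro ⟨a, w, d⟩ ⟨a', w', d'⟩ h
  have hden := add_algebraMap_ne_zero hα
  simp only [translateInv] at h
  field_simp [hden d, hden d'] at h
  obtain ⟨ha, hw, hd⟩ := eq_zero_of_algebraMap_quadratic_eq_zero h3
    (c₂ := a - a') (c₁ := (a - a') * (d + d') + w - w')
    (c₀ := (a - a') * (d * d') + w * d' - w' * d) <| by
      simp only [map_sub, map_add, map_mul]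
      linear_combination h
  obtain rfl := sub_eq_zero.mp ha
  obtain rfl : w = w' := Units.ext (by linear_combination hw)
  obtain rfl : d = d' := mul_left_cancel₀ w.ne_zero (by linear_combination -hd)
  rfl

theorem disjoint_range_affine_range_translateInv (hα : α ∉ Set.range (algebraMap F E))
    (h3 : 2 < finrank F F⟮α⟯) :
    Disjoint (Set.range (affine F α)) (Set.range (translateInv F α)) := by
  rw [Set.disjoint_left]
  rintro _ ⟨⟨u, v⟩, rfl⟩ ⟨⟨a, w, d⟩, h⟩
  simp only [affine, translateInv] at h
  field_simp [add_algebraMap_ne_zero hα d] at h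
  obtain ⟨hu, -, -⟩ := eq_zero_of_algebraMap_quadratic_eq_zero h3
    (c₂ := u) (c₁ := u * d + v - a) (c₀ := v * d - a * d - w) <| by
      simp only [map_sub, map_add, map_mul]
      linear_combination -h
  exact u.ne_zero hu

theorem ncard_of_two_lt_finrank [Finite F] (hα : α ∉ Set.range (algebraMap F E))
    (h3 : 2 < finrank F F⟮α⟯) : (Sset F α).ncard = Nat.card F ^ 3 - Nat.card F := by
  rw [eq_range_affine_union_range_translateInv hα,
    Set.ncard_union_eq (disjoint_range_affine_range_translateInv hα h3),
    Set.ncard_range_of_injective (affine_injective hα),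
    Set.ncard_range_of_injective (translateInv_injective hα h3)]
  simp only [Nat.card_prod, Nat.card_units]
  obtain _ | q := Nat.card F
  · simp
  · rw [Nat.add_sub_cancel, eq_comm, Nat.sub_eq_iff_eq_add (Nat.le_self_pow three_ne_zero _)]
    ring

end Sset

theorem stmt_0 (F E : Type*) [Field F] [Fintype F] [Field E] [Algebra F E]
    (q : ℕ) (hq : Fintype.card F = q)
    (α : E) (hα : α ∉ Set.range (algebraMap F E)) :
    (Module.finrank F (IntermediateField.adjoin F {α}) = 2 →
      (Sset F α).ncard = q ^ 2 - q) ∧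
    (2 < Module.finrank F (IntermediateField.adjoin F {α}) →
      (Sset F α).ncard = q ^ 3 - q) := by
  have hqcard : Nat.card F = q := Nat.card_eq_fintype_card.trans hq
  subst hqcard
  exact ⟨Sset.ncard_of_finrank_eq_two hα, Sset.ncard_of_two_lt_finrank hα⟩
end

section
/- Let F be a finite field with exactly q elements, E a field extension of F, and α ∈ E not in the image of the algebra map F → E. Let S̄_α be the family of subsets of E of the form {λ·α' : λ ∈ F, λ ≠ 0} as α' ranges over S_α (the cosets of F* in S_α). If [F(α) : F] = 2 then S̄_α has exactly q elements; if [F(α) : F] > 2 then S̄_α has exactly q² + q elements. -/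
/-- The family `S̄_α` of cosets of `F*` in `S_α`: the subsets of `E` of the form
`{λ·α' : λ ∈ F, λ ≠ 0}` for `α' ∈ S_α`. -/
def Sbar (F : Type*) {E : Type*} [Field F] [Field E] [Algebra F E] (α : E) : Set (Set E) :=
  {s | ∃ α' ∈ Sset F α, s = {x | ∃ l : F, l ≠ 0 ∧ x = algebraMap F E l * α'}}

open IntermediateField Module

theorem Set.ncard_eq_ncard_image_mul_of_fibers {X Y : Type*} {S : Set X} (hS : S.Finite)
    (f : X → Y) {k : ℕ} (hk : ∀ x ∈ S, (S ∩ f ⁻¹' {f x}).ncard = k) :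
    S.ncard = (f '' S).ncard * k := by
  classical
  lift S to Finset X using hS
  rw [Set.ncard_coe_finset, ← Finset.coe_image, Set.ncard_coe_finset,
    Finset.card_eq_sum_card_image f S, Finset.sum_const_nat]
  rintro _ hy
  obtain ⟨x, hx, rfl⟩ := Finset.mem_image.mp hy
  rw [← hk x hx, ← Set.ncard_coe_finset]
  congr 1
  ext; simp

theorem MulAction.ncard_orbit_of_free {G X : Type*} [Group G] [MulAction G X] {x : X}
    (hfree : ∀ g : G, g • x = x → g = 1) : (orbit G x).ncard = Nat.card G := by
  refine Set.ncard_range_of_injective fun g h hgh => ?_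
  have : (h⁻¹ * g) • x = x := by simp only [mul_smul, hgh, inv_smul_smul]
  simpa [inv_mul_eq_one, eq_comm] using hfree _ this

theorem MulAction.ncard_eq_ncard_image_orbit_mul {G X : Type*} [Group G] [MulAction G X]
    {S : Set X} (hS : S.Finite) (hinv : ∀ g : G, ∀ x ∈ S, g • x ∈ S)
    (hfree : ∀ x ∈ S, ∀ g : G, g • x = x → g = 1) :
    S.ncard = (orbit G '' S).ncard * Nat.card G := by
  refine Set.ncard_eq_ncard_image_mul_of_fibers hS _ fun x hx => ?_
  have hfiber : S ∩ orbit G ⁻¹' {orbit G x} = orbit G x := by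
    ext y
    simp only [Set.mem_inter_iff, Set.mem_preimage, Set.mem_singleton_iff, orbit_eq_iff]
    exact ⟨And.right, fun hy => ⟨by obtain ⟨g, rfl⟩ := hy; exact hinv g x hx, hy⟩⟩
  rw [hfiber, ncard_orbit_of_free (hfree x hx)]

theorem exists_smul_eq_of_cross_eq {K : Type*} [Field K] {a b c d a' b' c' d' : K}
    (hdet : a * d - b * c ≠ 0) (hdet' : a' * d' - b' * c' ≠ 0)
    (h₁ : a * c' = a' * c) (h₂ : a * d' + b * c' = a' * d + b' * c) (h₃ : b * d' = b' * d) :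
    ∃ μ : K, μ ≠ 0 ∧ a' = μ * a ∧ b' = μ * b ∧ c' = μ * c ∧ d' = μ * d := by
  -- `(a d - b c) (a', b', c', d') = (a' d - b c') (a, b, c, d)`
  set μ := (a' * d - b * c') / (a * d - b * c)
  have ha : a' = μ * a := by
    rw [div_mul_eq_mul_div, eq_div_iff hdet]; linear_combination b * h₁
  have hb : b' = μ * b := by
    rw [div_mul_eq_mul_div, eq_div_iff hdet]; linear_combination b * h₂ - a * h₃
  have hc : c' = μ * c := by
    rw [div_mul_eq_mul_div, eq_div_iff hdet]; linear_combination d * h₁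
  have hd : d' = μ * d := by
    rw [div_mul_eq_mul_div, eq_div_iff hdet]; linear_combination d * h₂ - c * h₃
  refine ⟨μ, fun hμ => hdet' ?_, ha, hb, hc, hd⟩
  simp [ha, hb, hc, hd, hμ]

theorem Matrix.GeneralLinearGroup.eq_one_of_units_smul_eq_self {n R : Type*} [Fintype n]
    [DecidableEq n] [Nonempty n] [CommRing R] {μ : Rˣ} {g : GL n R} (h : μ • g = g) :
    μ = 1 := by
  let i := Classical.arbitrary n
  have h1 := congrArg (fun g' : GL n R => ((g' : Matrix n n R) * (g⁻¹ : GL n R)) i i) h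
  exact Units.ext (by simpa [Units.smul_def, Matrix.smul_mul] using h1)

section

variable {F E : Type*} [Field F] [Field E] [Algebra F E]

theorem isIntegral_of_finrank_adjoin_pos {α : E} (h : 0 < finrank F F⟮α⟯) : IsIntegral F α :=
  have : Module.Finite F F⟮α⟯ := Module.finite_of_finrank_pos h
  isIntegral_iff.mp (IsIntegral.of_finite F (AdjoinSimple.gen F α))

theorem linearIndependent_pow_of_le_finrank {α : E} {n : ℕ} (hn : n ≤ finrank F F⟮α⟯) :
    LinearIndependent F fun i : Fin n => α ^ (i : ℕ) := by
  rcases Nat.eq_zero_or_pos n with rfl | hn0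
  · exact linearIndependent_empty_type
  have hint := isIntegral_of_finrank_adjoin_pos (hn0.trans_le hn)
  rw [adjoin.finrank hint] at hn
  exact (linearIndependent_pow α).comp (Fin.castLE hn) (Fin.castLE_injective hn)

theorem linear_coeffs_eq_zero {α : E} (h : 2 ≤ finrank F F⟮α⟯) {a b : F}
    (hab : algebraMap F E a * α + algebraMap F E b = 0) : a = 0 ∧ b = 0 := by
  have hli : LinearIndependent F fun i : Fin 2 => α ^ (i : ℕ) :=
    linearIndependent_pow_of_le_finrank h
  have := Fintype.linearIndependent_iff.mp hli ![b, a] (by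
    simpa only [Fin.sum_univ_two, Algebra.smul_def, Matrix.cons_val_zero, Matrix.cons_val_one,
      Fin.val_zero, Fin.val_one, pow_zero, pow_one, mul_one, add_comm] using hab)
  exact ⟨this 1, this 0⟩

theorem quadratic_coeffs_eq_zero {α : E} (h : 3 ≤ finrank F F⟮α⟯) {a b c : F}
    (habc : algebraMap F E a * α ^ 2 + algebraMap F E b * α + algebraMap F E c = 0) :
    a = 0 ∧ b = 0 ∧ c = 0 := by
  have hli : LinearIndependent F fun i : Fin 3 => α ^ (i : ℕ) :=
    linearIndependent_pow_of_le_finrank h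
  have := Fintype.linearIndependent_iff.mp hli ![c, b, a] (by
    simp only [Fin.sum_univ_three, Algebra.smul_def, Matrix.cons_val_zero, Matrix.cons_val_one,
      Matrix.cons_val_two, Matrix.tail_cons, Matrix.head_cons, Fin.val_zero, Fin.val_one,
      Fin.val_two, pow_zero, pow_one, mul_one]
    linear_combination habc)
  exact ⟨this 2, this 1, this 0⟩

def moebius (α : E) (g : GL (Fin 2) F) : E :=
  (algebraMap F E (g 0 0) * α + algebraMap F E (g 0 1)) /
    (algebraMap F E (g 1 0) * α + algebraMap F E (g 1 1))

theorem range_moebius (α : E) : Set.range (moebius (F := F) α) = Sset F α := by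
  ext x
  constructor
  · rintro ⟨g, rfl⟩
    refine ⟨g 0 0, g 0 1, g 1 0, g 1 1, fun h => g.det_ne_zero ?_, rfl⟩
    rw [Matrix.det_fin_two, h, sub_self]
  · rintro ⟨a, b, c, d, h, rfl⟩
    have hdet : (!![a, b; c, d]).det ≠ 0 := by rwa [Matrix.det_fin_two_of, sub_ne_zero]
    exact ⟨.mkOfDetNeZero _ hdet, by simp [moebius]⟩

theorem moebius_denom_ne_zero {α : E} (h : 2 ≤ finrank F F⟮α⟯) (g : GL (Fin 2) F) :
    algebraMap F E (g 1 0) * α + algebraMap F E (g 1 1) ≠ 0 := fun h0 => by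
  obtain ⟨hc, hd⟩ := linear_coeffs_eq_zero h h0
  exact g.det_ne_zero (by rw [Matrix.det_fin_two, hc, hd, mul_zero, mul_zero, sub_zero])

theorem moebius_units_smul (α : E) (μ : Fˣ) (g : GL (Fin 2) F) :
    moebius α (μ • g) = moebius α g := by
  have hμ : algebraMap F E μ ≠ 0 := by simp
  simp only [moebius, Units.smul_def, Units.val_smul, Matrix.smul_apply, smul_eq_mul, map_mul,
    mul_assoc, ← mul_add]
  exact mul_div_mul_left _ _ hμ

theorem moebius_eq_moebius_iff {α : E} (h : 3 ≤ finrank F F⟮α⟯) {g g' : GL (Fin 2) F} :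
    moebius α g' = moebius α g ↔ g' ∈ MulAction.orbit Fˣ g := by
  refine ⟨fun hgg' => ?_, fun ⟨μ, hμ⟩ => hμ ▸ moebius_units_smul α μ g⟩
  rw [moebius, moebius, div_eq_div_iff (moebius_denom_ne_zero (by omega) g')
    (moebius_denom_ne_zero (by omega) g)] at hgg'
  obtain ⟨h₁, h₂, h₃⟩ := quadratic_coeffs_eq_zero h
    (a := g 0 0 * g' 1 0 - g' 0 0 * g 1 0)
    (b := g 0 0 * g' 1 1 + g 0 1 * g' 1 0 - g' 0 0 * g 1 1 - g' 0 1 * g 1 0)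
    (c := g 0 1 * g' 1 1 - g' 0 1 * g 1 1)
    (by simp only [map_sub, map_add, map_mul]; linear_combination -hgg')
  obtain ⟨μ, hμ, h00, h01, h10, h11⟩ := exists_smul_eq_of_cross_eq
    (by rw [← Matrix.det_fin_two]; exact g.det_ne_zero)
    (by rw [← Matrix.det_fin_two]; exact g'.det_ne_zero)
    (sub_eq_zero.mp h₁) (by linear_combination h₂) (sub_eq_zero.mp h₃)
  refine ⟨Units.mk0 μ hμ, Matrix.GeneralLinearGroup.ext fun i j => ?_⟩
  fin_cases i <;> fin_cases j <;> simp [Units.smul_def, h00, h01, h10, h11]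

theorem orbit_units_eq (β : E) :
    MulAction.orbit Fˣ β = {x | ∃ l : F, l ≠ 0 ∧ x = algebraMap F E l * β} := by
  ext x
  constructor
  · rintro ⟨u, rfl⟩
    exact ⟨u, u.ne_zero, Algebra.smul_def _ _⟩
  · rintro ⟨l, hl, rfl⟩
    exact ⟨Units.mk0 l hl, Algebra.smul_def _ _⟩

theorem Sbar_eq_image_orbit (α : E) : Sbar F α = MulAction.orbit Fˣ '' Sset F α := by
  ext s
  simp only [Sbar, Set.mem_ofPred_eq, Set.mem_image, orbit_units_eq, eq_comm]

theorem units_smul_mem_Sset {α : E} (μ : Fˣ) {x : E} (hx : x ∈ Sset F α) :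
    μ • x ∈ Sset F α := by
  obtain ⟨a, b, c, d, h, rfl⟩ := hx
  have hdet : μ * a * d ≠ μ * b * c := by
    simpa only [mul_assoc] using (mul_right_injective₀ μ.ne_zero).ne h
  refine ⟨μ * a, μ * b, c, d, hdet, ?_⟩
  simp only [Units.smul_def, Algebra.smul_def, map_mul, mul_assoc, ← mul_add, mul_div_assoc]

theorem zero_notMem_Sset {α : E} (h : 2 ≤ finrank F F⟮α⟯) : (0 : E) ∉ Sset F α := by
  rw [← range_moebius]
  rintro ⟨g, hg⟩
  rw [moebius, div_eq_zero_iff, or_iff_left (moebius_denom_ne_zero h g)] at hg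
  obtain ⟨ha, hb⟩ := linear_coeffs_eq_zero h hg
  exact g.det_ne_zero (by rw [Matrix.det_fin_two, ha, hb, zero_mul, zero_mul, sub_zero])

theorem ncard_Sset_eq_ncard_Sbar_mul [Finite F] {α : E} (h : 2 ≤ finrank F F⟮α⟯) :
    (Sset F α).ncard = (Sbar F α).ncard * Nat.card Fˣ := by
  rw [Sbar_eq_image_orbit]
  refine MulAction.ncard_eq_ncard_image_orbit_mul (range_moebius (F := F) α ▸ Set.finite_range _)
    units_smul_mem_Sset fun x hx μ hμ => ?_
  have hx0 : x ≠ 0 := fun h0 => zero_notMem_Sset h (h0 ▸ hx)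
  have : (μ : F) • x = (1 : F) • x := by rwa [one_smul]
  exact Units.ext (smul_left_injective F hx0 this)

theorem natCard_GL_eq_ncard_Sset_mul [Finite F] {α : E} (h : 3 ≤ finrank F F⟮α⟯) :
    Nat.card (GL (Fin 2) F) = (Sset F α).ncard * Nat.card Fˣ := by
  rw [← Set.ncard_univ, ← range_moebius, ← Set.image_univ]
  refine Set.ncard_eq_ncard_image_mul_of_fibers Set.finite_univ _ fun g _ => ?_
  have hfiber : Set.univ ∩ moebius α ⁻¹' {moebius α g} = MulAction.orbit Fˣ g := by
    ext g'
    simp [moebius_eq_moebius_iff h]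
  rw [hfiber, MulAction.ncard_orbit_of_free fun μ ↦
    Matrix.GeneralLinearGroup.eq_one_of_units_smul_eq_self]

theorem exists_eq_linear_of_finrank_eq_two {α : E} (h : finrank F F⟮α⟯ = 2) {x : E}
    (hx : x ∈ F⟮α⟯) : ∃ u v : F, x = algebraMap F E u * α + algebraMap F E v := by
  have hint : IsIntegral F α := isIntegral_of_finrank_adjoin_pos (by omega)
  set pb := adjoin.powerBasis hint
  have hdim : pb.dim = 2 := by rw [← h, adjoin.finrank hint]; rfl
  obtain ⟨f, hf, hfx⟩ := pb.exists_eq_aeval ⟨x, hx⟩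
  rw [Polynomial.eq_X_add_C_of_natDegree_le_one (by omega : f.natDegree ≤ 1)] at hfx
  refine ⟨f.coeff 1, f.coeff 0, ?_⟩
  simpa [pb] using congrArg Subtype.val hfx

theorem moebius_mem_adjoin (α : E) (g : GL (Fin 2) F) : moebius α g ∈ F⟮α⟯ := by
  have hα := mem_adjoin_simple_self F α
  have hF := IntermediateField.algebraMap_mem F⟮α⟯
  exact div_mem (add_mem (mul_mem (hF _) hα) (hF _)) (add_mem (mul_mem (hF _) hα) (hF _))

theorem Sset_eq_adjoin_diff_range {α : E} (h : finrank F F⟮α⟯ = 2) :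
    Sset F α = (F⟮α⟯ : Set E) \ Set.range (algebraMap F E) := by
  ext x
  constructor
  · rw [← range_moebius]
    rintro ⟨g, rfl⟩
    refine ⟨moebius_mem_adjoin α g, ?_⟩
    rintro ⟨e, he⟩
    rw [moebius, eq_div_iff (moebius_denom_ne_zero h.ge g)] at he
    obtain ⟨h₀₀, h₀₁⟩ := linear_coeffs_eq_zero h.ge (a := g 0 0 - e * g 1 0)
      (b := g 0 1 - e * g 1 1) (by simp only [map_sub, map_mul]; linear_combination -he)
    refine g.det_ne_zero ?_
    rw [Matrix.det_fin_two]
    linear_combination g 1 1 * h₀₀ - g 1 0 * h₀₁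
  · rintro ⟨hx, hxF⟩
    obtain ⟨u, v, rfl⟩ := exists_eq_linear_of_finrank_eq_two h hx
    have hu : u ≠ 0 := by
      rintro rfl
      exact hxF ⟨v, by simp⟩
    exact ⟨u, v, 0, 1, by simpa using hu, by simp⟩

theorem ncard_Sset_of_finrank_eq_two [Fintype F] {α : E} (h : finrank F F⟮α⟯ = 2) :
    (Sset F α).ncard = Fintype.card F * (Fintype.card F - 1) := by
  have : Module.Finite F F⟮α⟯ := Module.finite_of_finrank_pos (by omega)
  have hsub : Set.range (algebraMap F E) ⊆ F⟮α⟯ :=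
    Set.range_subset_iff.mpr (IntermediateField.algebraMap_mem F⟮α⟯)
  rw [Sset_eq_adjoin_diff_range h, Set.ncard_sdiff hsub,
    Set.ncard_range_of_injective (algebraMap F E).injective, ← Nat.card_coe_set_eq,
    SetLike.coe_sort_coe, Module.natCard_eq_pow_finrank (K := F), h, Nat.card_eq_fintype_card,
    Nat.mul_sub_one, sq]

theorem ncard_Sbar_of_finrank_eq_two [Fintype F] {α : E} (h : finrank F F⟮α⟯ = 2) :
    (Sbar F α).ncard = Fintype.card F := by
  have hcount := ncard_Sset_eq_ncard_Sbar_mul h.ge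
  rw [ncard_Sset_of_finrank_eq_two h, Nat.card_units, Nat.card_eq_fintype_card] at hcount
  have : 1 < Fintype.card F := Fintype.one_lt_card
  exact (Nat.eq_of_mul_eq_mul_right (by omega) hcount).symm

theorem ncard_Sbar_of_three_le_finrank [Fintype F] {α : E} (h : 3 ≤ finrank F F⟮α⟯) :
    (Sbar F α).ncard = Fintype.card F ^ 2 + Fintype.card F := by
  have hcount := natCard_GL_eq_ncard_Sset_mul h
  rw [ncard_Sset_eq_ncard_Sbar_mul (by omega), Matrix.card_GL_field, Fin.prod_univ_two,
    Nat.card_units, Nat.card_eq_fintype_card] at hcount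
  set q := Fintype.card F
  have hq : 1 < q := Fintype.one_lt_card
  have hq₁ : q ^ 2 - q ^ 0 = (q + 1) * (q - 1) := by rw [pow_zero, ← Nat.sq_sub_sq, one_pow]
  have hq₂ : q ^ 2 - q ^ 1 = q * (q - 1) := by rw [pow_one, Nat.mul_sub_one, sq]
  have : (Sbar F α).ncard * (q - 1) * (q - 1) = (q ^ 2 + q) * (q - 1) * (q - 1) := by
    simp only [Fin.val_zero, Fin.val_one] at hcount
    rw [← hcount, hq₁, hq₂]
    ring
  exact Nat.eq_of_mul_eq_mul_right (by omega) (Nat.eq_of_mul_eq_mul_right (by omega) this)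

end

theorem stmt_1_general (F E : Type*) [Field F] [Fintype F] [Field E] [Algebra F E]
    (q : ℕ) (hq : Fintype.card F = q)
    (α : E) :
    (Module.finrank F (IntermediateField.adjoin F {α}) = 2 →
      (Sbar F α).ncard = q) ∧
    (2 < Module.finrank F (IntermediateField.adjoin F {α}) →
      (Sbar F α).ncard = q ^ 2 + q) := by
  subst hq
  exact ⟨ncard_Sbar_of_finrank_eq_two, ncard_Sbar_of_three_le_finrank⟩

theorem stmt_1 (F E : Type*) [Field F] [Fintype F] [Field E] [Algebra F E]
    (q : ℕ) (hq : Fintype.card F = q)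
    (α : E) (hα : α ∉ Set.range (algebraMap F E)) :
    (Module.finrank F (IntermediateField.adjoin F {α}) = 2 →
      (Sbar F α).ncard = q) ∧
    (2 < Module.finrank F (IntermediateField.adjoin F {α}) →
      (Sbar F α).ncard = q ^ 2 + q) :=
  stmt_1_general F E q hq α
end

section
/- Let F be a finite field, E a field extension of F, k ≥ 1, and W an E-subspace of E^k = (Fin k → E) containing no nonzero F-rational vector. Let α ∈ E not in the image of F with [F(α) : F] = 2, let v, u₁, u₂ be nonzero F-rational vectors, and let β₁, β₂ ∈ S_α be such that v − β₁·u₁ ∈ W and v − β₂·u₂ ∈ W. Then u₂ lies in the F-span of {v, u₁}; in other words, through a point of the canonical subgeometry there is at most one Π-line of type S_α when [F(α) : F] = 2. -/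
theorem linearIndependent_one_of_notMem_range_algebraMap {F A : Type*} [Field F] [Ring A]
    [Nontrivial A] [Algebra F A] {α : A} (hα : α ∉ Set.range (algebraMap F A)) :
    LinearIndependent F ![1, α] :=
  (LinearIndependent.pair_iff' one_ne_zero).2 fun a ha =>
    hα ⟨a, by rwa [Algebra.algebraMap_eq_smul_one]⟩

theorem eq_zero_of_algebraMap_add_algebraMap_mul_eq_zero {F A : Type*} [Field F] [Ring A]
    [Nontrivial A] [Algebra F A] {α : A} (hα : α ∉ Set.range (algebraMap F A)) {s t : F}
    (h : algebraMap F A s + algebraMap F A t * α = 0) : s = 0 ∧ t = 0 := by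
  refine (LinearIndependent.pair_iff (R := F) (x := (1 : A)) (y := α)).1
    (linearIndependent_one_of_notMem_range_algebraMap hα) s t ?_
  rwa [Algebra.smul_def, Algebra.smul_def, mul_one]

theorem IntermediateField.exists_eq_algebraMap_add_algebraMap_mul_of_finrank_eq_two
    {F E : Type*} [Field F] [Field E] [Algebra F E] {K : IntermediateField F E}
    (hK : Module.finrank F K = 2) {γ δ : E} (hγK : γ ∈ K) (hγ : γ ∉ Set.range (algebraMap F E))
    (hδ : δ ∈ K) : ∃ a b : F, δ = algebraMap F E a + algebraMap F E b * γ := by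
  have hγ' : (⟨γ, hγK⟩ : K) ∉ Set.range (algebraMap F K) := fun ⟨c, hc⟩ =>
    hγ ⟨c, congrArg Subtype.val hc⟩
  have hspan := LinearIndependent.span_eq_top_of_card_eq_finrank
    (linearIndependent_one_of_notMem_range_algebraMap hγ') (by simp [hK])
  have hδ' : (⟨δ, hδ⟩ : K) ∈ Submodule.span F (Set.range ![1, ⟨γ, hγK⟩]) := hspan ▸ trivial
  rw [Matrix.range_cons_cons_empty, Submodule.mem_span_pair] at hδ'
  obtain ⟨a, b, hab⟩ := hδ'
  exact ⟨a, b, by simpa [Algebra.smul_def] using (congrArg Subtype.val hab).symm⟩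

namespace Sset

variable {F E : Type*} [Field F] [Field E] [Algebra F E] {α β : E}

theorem mem_adjoin_simple (hβ : β ∈ Sset F α) : β ∈ IntermediateField.adjoin F {α} := by
  obtain ⟨a, b, c, d, -, rfl⟩ := hβ
  set K := IntermediateField.adjoin F {α}
  have hαK : α ∈ K := IntermediateField.mem_adjoin_simple_self F α
  exact K.div_mem (K.add_mem (K.mul_mem (K.algebraMap_mem a) hαK) (K.algebraMap_mem b))
    (K.add_mem (K.mul_mem (K.algebraMap_mem c) hαK) (K.algebraMap_mem d))

theorem notMem_range_algebraMap (hα : α ∉ Set.range (algebraMap F E)) (hβ : β ∈ Sset F α) :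
    β ∉ Set.range (algebraMap F E) := by
  obtain ⟨a, b, c, d, had, rfl⟩ := hβ
  have hD : algebraMap F E c * α + algebraMap F E d ≠ 0 := fun h0 => by
    obtain ⟨rfl, rfl⟩ := eq_zero_of_algebraMap_add_algebraMap_mul_eq_zero hα
      (by rwa [add_comm] at h0)
    simp at had
  rintro ⟨e, he⟩
  rw [eq_div_iff hD] at he
  obtain ⟨hb, ha⟩ := eq_zero_of_algebraMap_add_algebraMap_mul_eq_zero hα
    (s := e * d - b) (t := e * c - a) (by simp only [map_sub, map_mul]; linear_combination he)
  exact had (by linear_combination d * (sub_eq_zero.1 ha).symm - c * (sub_eq_zero.1 hb).symm)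

end Sset

def rationalVectors (F E ι : Type*) [Field F] [Field E] [Algebra F E] : Submodule F (ι → E) :=
  Submodule.pi Set.univ fun _ => 1

theorem mem_rationalVectors {F E ι : Type*} [Field F] [Field E] [Algebra F E] {x : ι → E} :
    x ∈ rationalVectors F E ι ↔ ∀ i, x i ∈ Set.range (algebraMap F E) := by
  simp [rationalVectors, Submodule.mem_pi, Submodule.mem_one, Set.mem_range]

theorem stmt_6_general (F E : Type*) [Field F] [Field E] [Algebra F E]
    (k : ℕ) (W : Submodule E (Fin k → E))
    (hW : ∀ x ∈ W, (∀ i, x i ∈ Set.range (algebraMap F E)) → x = 0)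
    (α : E) (hα : α ∉ Set.range (algebraMap F E))
    (hdeg : Module.finrank F (IntermediateField.adjoin F {α}) = 2)
    (v u₁ u₂ : Fin k → E)
    (hv : ∀ i, v i ∈ Set.range (algebraMap F E))
    (hu₁ : ∀ i, u₁ i ∈ Set.range (algebraMap F E))
    (hu₂ : ∀ i, u₂ i ∈ Set.range (algebraMap F E))
    (β₁ β₂ : E) (hβ₁ : β₁ ∈ Sset F α) (hβ₂ : β₂ ∈ Sset F α)
    (h1 : v - β₁ • u₁ ∈ W) (h2 : v - β₂ • u₂ ∈ W) :
    u₂ ∈ Submodule.span F ({v, u₁} : Set (Fin k → E)) := by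
  set K := IntermediateField.adjoin F {α}
  have hβ₁F := Sset.notMem_range_algebraMap hα hβ₁
  have hβ₁0 : β₁ ≠ 0 := fun h => hβ₁F ⟨0, by simp [h]⟩
  have hβ₂0 : β₂ ≠ 0 := fun h => Sset.notMem_range_algebraMap hα hβ₂ ⟨0, by simp [h]⟩
  obtain ⟨a, b, hab⟩ := K.exists_eq_algebraMap_add_algebraMap_mul_of_finrank_eq_two hdeg
    (K.inv_mem (Sset.mem_adjoin_simple hβ₁))
    (fun ⟨c, hc⟩ => hβ₁F ⟨c⁻¹, by rw [map_inv₀, hc, inv_inv]⟩)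
    (K.inv_mem (Sset.mem_adjoin_simple hβ₂))
  have hmemW : a • v + b • u₁ - u₂ ∈ W := by
    convert W.sub_mem (W.smul_mem β₂⁻¹ h2) (W.smul_mem (algebraMap F E b * β₁⁻¹) h1) using 1
    ext i
    simp only [Pi.sub_apply, Pi.add_apply, Pi.smul_apply, smul_eq_mul]
    rw [Algebra.smul_def a, Algebra.smul_def b]
    linear_combination (-v i) * hab + u₂ i * inv_mul_cancel₀ hβ₂0
      - algebraMap F E b * u₁ i * inv_mul_cancel₀ hβ₁0
  have hrat : a • v + b • u₁ - u₂ ∈ rationalVectors F E (Fin k) :=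
    sub_mem (add_mem (Submodule.smul_mem _ a (mem_rationalVectors.2 hv))
      (Submodule.smul_mem _ b (mem_rationalVectors.2 hu₁))) (mem_rationalVectors.2 hu₂)
  rw [Submodule.mem_span_pair]
  exact ⟨a, b, sub_eq_zero.1 (hW _ hmemW (mem_rationalVectors.1 hrat))⟩

theorem stmt_6 (F E : Type*) [Field F] [Fintype F] [Field E] [Algebra F E]
    (k : ℕ) (hk : 1 ≤ k) (W : Submodule E (Fin k → E))
    (hW : ∀ x ∈ W, (∀ i, x i ∈ Set.range (algebraMap F E)) → x = 0)
    (α : E) (hα : α ∉ Set.range (algebraMap F E))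
    (hdeg : Module.finrank F (IntermediateField.adjoin F {α}) = 2)
    (v u₁ u₂ : Fin k → E) (hv0 : v ≠ 0) (hu₁0 : u₁ ≠ 0) (hu₂0 : u₂ ≠ 0)
    (hv : ∀ i, v i ∈ Set.range (algebraMap F E))
    (hu₁ : ∀ i, u₁ i ∈ Set.range (algebraMap F E))
    (hu₂ : ∀ i, u₂ i ∈ Set.range (algebraMap F E))
    (β₁ β₂ : E) (hβ₁ : β₁ ∈ Sset F α) (hβ₂ : β₂ ∈ Sset F α)
    (h1 : v - β₁ • u₁ ∈ W) (h2 : v - β₂ • u₂ ∈ W) :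
    u₂ ∈ Submodule.span F ({v, u₁} : Set (Fin k → E)) :=
  stmt_6_general F E k W hW α hα hdeg v u₁ u₂ hv hu₁ hu₂ β₁ β₂ hβ₁ hβ₂ h1 h2
end

section
/- Let E be a field, V an E-vector space, and u₁, v₁, u₂, v₂ ∈ V linearly independent over E. Let α, α', ψ ∈ E and set M = span_E{u₁ − α·v₁, u₂ − α'·v₂}. If (u₁ + u₂) − ψ·(v₁ + v₂) ∈ M, then α' = α and ψ = α; consequently, for every λ ∈ E one has (u₁ + λ·u₂) − α·(v₁ + λ·v₂) ∈ M. (This is the core of the regulus lemma: if three mutually disjoint Π-lines in a 3-space have extensions meeting a common line M of the vertex, then all lines of the regulus they determine are Π-lines of the same type.) -/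
/-!
Writing the given vector as `a • (u₁ - α • v₁) + b • (u₂ - α' • v₂)` and comparing coordinates
in the independent family `u₁, v₁, u₂, v₂` forces `a = b = 1` and `ψ = α = α'`. Once `α' = α`,
`(u₁ + λ • u₂) - α • (v₁ + λ • v₂)` is the combination with coefficients `1` and `λ`.
-/

lemma LinearIndependent.eq_of_four {R M : Type*} [Semiring R] [AddCommMonoid M] [Module R M]
    {x₀ x₁ x₂ x₃ : M} (h : LinearIndependent R ![x₀, x₁, x₂, x₃]) {s₀ s₁ s₂ s₃ t₀ t₁ t₂ t₃ : R}
    (h' : s₀ • x₀ + s₁ • x₁ + s₂ • x₂ + s₃ • x₃ = t₀ • x₀ + t₁ • x₁ + t₂ • x₂ + t₃ • x₃) :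
    s₀ = t₀ ∧ s₁ = t₁ ∧ s₂ = t₂ ∧ s₃ = t₃ := by
  have := Fintype.linearIndependent_iffₛ.mp h ![s₀, s₁, s₂, s₃] ![t₀, t₁, t₂, t₃]
    (by simpa [Fin.sum_univ_four] using h')
  exact ⟨this 0, this 1, this 2, this 3⟩

section Regulus

variable {R V : Type*} [CommRing R] [AddCommGroup V] [Module R V] {u₁ v₁ u₂ v₂ : V}

lemma eq_of_add_sub_smul_add_mem_span_pair (hind : LinearIndependent R ![u₁, v₁, u₂, v₂])
    {α α' ψ : R}
    (h : (u₁ + u₂) - ψ • (v₁ + v₂) ∈ Submodule.span R {u₁ - α • v₁, u₂ - α' • v₂}) :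
    α' = α ∧ ψ = α := by
  obtain ⟨a, b, hab⟩ := Submodule.mem_span_pair.mp h
  have hcoeff : a • u₁ + (-(a * α)) • v₁ + b • u₂ + (-(b * α')) • v₂ =
      (1 : R) • u₁ + (-ψ) • v₁ + (1 : R) • u₂ + (-ψ) • v₂ := by
    rw [← sub_eq_zero, ← sub_eq_zero.mpr hab]
    simp only [neg_smul, one_smul, mul_smul, smul_sub, smul_add]
    abel
  obtain ⟨rfl, hψ, rfl, hψ'⟩ := hind.eq_of_four hcoeff
  rw [one_mul, neg_inj] at hψ hψ'
  exact ⟨hψ'.trans hψ.symm, hψ.symm⟩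

lemma add_smul_sub_smul_add_smul_mem_span_pair (α l : R) :
    (u₁ + l • u₂) - α • (v₁ + l • v₂) ∈ Submodule.span R {u₁ - α • v₁, u₂ - α • v₂} :=
  Submodule.mem_span_pair.mpr ⟨1, l, by
    simp only [one_smul, smul_sub, smul_add, smul_comm l α]
    abel⟩

end Regulus

theorem stmt_9 (E : Type*) [Field E] (V : Type*) [AddCommGroup V] [Module E V]
    (u₁ v₁ u₂ v₂ : V) (hind : LinearIndependent E ![u₁, v₁, u₂, v₂])
    (α α' ψ : E)
    (h : (u₁ + u₂) - ψ • (v₁ + v₂) ∈ Submodule.span E {u₁ - α • v₁, u₂ - α' • v₂}) :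
    α' = α ∧ ψ = α ∧
      ∀ l : E, (u₁ + l • u₂) - α • (v₁ + l • v₂) ∈
        Submodule.span E {u₁ - α • v₁, u₂ - α' • v₂} := by
  obtain ⟨hα, hψ⟩ := eq_of_add_sub_smul_add_mem_span_pair hind h
  refine ⟨hα, hψ, fun l ↦ ?_⟩
  rw [hα]
  exact add_smul_sub_smul_add_smul_mem_span_pair α l
end

section
/- Let F be a field, E a field extension of F, V an E-vector space, and u₁, v₁, u₂, v₂ ∈ V linearly independent over E. Let α ∈ E with [F(α) : F] > 2, where F(α) is the intermediate field of E/F generated by α. Let λ₁, λ₂, λ₃, λ₄, μ₁, μ₂, μ₃, μ₄ ∈ F (viewed in E via the algebra map), and set u = λ₁·u₁ + λ₂·v₁ + λ₃·u₂ + λ₄·v₂ and v = μ₁·u₁ + μ₂·v₁ + μ₃·u₂ + μ₄·v₂. If u − α·v ∈ span_E{u₁ − α·v₁, u₂ − α·v₂}, then λ₂ = λ₄ = 0, μ₁ = μ₃ = 0, μ₂ = λ₁, and μ₄ = λ₃. (Equivalently: if a 3-space contains a Π-line through the common line M of the vertex outside the regulus determined by three such lines, then [F(α) : F] = 2.) 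-/
/-!
Write `u - α • v = a • (u₁ - α • v₁) + b • (u₂ - α • v₂)`. Comparing coordinates in the basis
`u₁, v₁, u₂, v₂` gives `l₁ - α m₁ = a` and `l₂ - α m₂ = -α a`, so `α` is a root of
`-m₁ X² + (l₁ - m₂) X + l₂ ∈ F[X]`, and similarly for the second line. Since `α` has degree
greater than two over `F`, both quadratics vanish identically.
-/

section

open Polynomial IntermediateField

variable {F E : Type*} [Field F] [Field E] [Algebra F E] {α : E}

theorem Polynomial.eq_zero_of_aeval_eq_zero_of_natDegree_lt_finrank_adjoin {p : F[X]}
    (hdeg : p.natDegree < Module.finrank F F⟮α⟯) (hroot : aeval α p = 0) : p = 0 := by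
  by_contra hp
  have hint : IsIntegral F α := IsAlgebraic.isIntegral ⟨p, hp, hroot⟩
  rw [adjoin.finrank hint] at hdeg
  exact hdeg.not_ge (natDegree_le_natDegree (minpoly.degree_le_of_ne_zero F α hp hroot))

theorem eq_zero_of_quadratic_eq_zero_of_two_lt_finrank_adjoin
    (hα : 2 < Module.finrank F F⟮α⟯) {a b c : F}
    (h : algebraMap F E a * α ^ 2 + algebraMap F E b * α + algebraMap F E c = 0) :
    a = 0 ∧ b = 0 ∧ c = 0 := by
  have hp : C a * X ^ 2 + C b * X + C c = 0 :=
    eq_zero_of_aeval_eq_zero_of_natDegree_lt_finrank_adjoin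
      (natDegree_quadratic_le.trans_lt hα) (by simpa [Algebra.smul_def] using h)
  refine ⟨?_, ?_, ?_⟩
  · simpa using congrArg (coeff · 2) hp
  · simpa using congrArg (coeff · 1) hp
  · simpa using congrArg (coeff · 0) hp

theorem eq_zero_and_eq_of_sub_mul_eq_neg_mul_sub_mul (hα : 2 < Module.finrank F F⟮α⟯)
    {l₁ l₂ m₁ m₂ : F}
    (h : algebraMap F E l₂ - α * algebraMap F E m₂ =
      -α * (algebraMap F E l₁ - α * algebraMap F E m₁)) :
    l₂ = 0 ∧ m₁ = 0 ∧ m₂ = l₁ := by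
  have hq : algebraMap F E (-m₁) * α ^ 2 + algebraMap F E (l₁ - m₂) * α +
      algebraMap F E l₂ = 0 := by
    simp only [map_neg, map_sub]
    linear_combination h
  obtain ⟨hm₁, hl₁m₂, hl₂⟩ := eq_zero_of_quadratic_eq_zero_of_two_lt_finrank_adjoin hα hq
  exact ⟨hl₂, neg_eq_zero.mp hm₁, (sub_eq_zero.mp hl₁m₂).symm⟩

theorem LinearIndependent.eq_zero_of_fin_four {V : Type*} [AddCommGroup V] [Module E V]
    {w₀ w₁ w₂ w₃ : V} (hind : LinearIndependent E ![w₀, w₁, w₂, w₃]) {c₀ c₁ c₂ c₃ : E}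
    (h : c₀ • w₀ + c₁ • w₁ + c₂ • w₂ + c₃ • w₃ = 0) :
    c₀ = 0 ∧ c₁ = 0 ∧ c₂ = 0 ∧ c₃ = 0 := by
  have key := Fintype.linearIndependent_iff.mp hind ![c₀, c₁, c₂, c₃]
    (by simpa [Fin.sum_univ_four] using h)
  exact ⟨key 0, key 1, key 2, key 3⟩

end

theorem stmt_10 (F E : Type*) [Field F] [Field E] [Algebra F E]
    (V : Type*) [AddCommGroup V] [Module E V]
    (u₁ v₁ u₂ v₂ : V) (hind : LinearIndependent E ![u₁, v₁, u₂, v₂])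
    (α : E) (hα : 2 < Module.finrank F (IntermediateField.adjoin F {α}))
    (l₁ l₂ l₃ l₄ m₁ m₂ m₃ m₄ : F)
    (h : (algebraMap F E l₁ • u₁ + algebraMap F E l₂ • v₁ +
          algebraMap F E l₃ • u₂ + algebraMap F E l₄ • v₂) -
        α • (algebraMap F E m₁ • u₁ + algebraMap F E m₂ • v₁ +
          algebraMap F E m₃ • u₂ + algebraMap F E m₄ • v₂) ∈
        Submodule.span E {u₁ - α • v₁, u₂ - α • v₂}) :
    l₂ = 0 ∧ l₄ = 0 ∧ m₁ = 0 ∧ m₃ = 0 ∧ m₂ = l₁ ∧ m₄ = l₃ := by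
  obtain ⟨a, b, hab⟩ := Submodule.mem_span_pair.mp h
  obtain ⟨e₀, e₁, e₂, e₃⟩ := hind.eq_zero_of_fin_four
    (c₀ := algebraMap F E l₁ - α * algebraMap F E m₁ - a)
    (c₁ := algebraMap F E l₂ - α * algebraMap F E m₂ + α * a)
    (c₂ := algebraMap F E l₃ - α * algebraMap F E m₃ - b)
    (c₃ := algebraMap F E l₄ - α * algebraMap F E m₄ + α * b)
    (by linear_combination (norm := module) -hab)
  obtain ⟨hl₂, hm₁, hm₂⟩ := eq_zero_and_eq_of_sub_mul_eq_neg_mul_sub_mul hα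
    (l₁ := l₁) (l₂ := l₂) (m₁ := m₁) (m₂ := m₂) (by linear_combination e₁ + α * e₀)
  obtain ⟨hl₄, hm₃, hm₄⟩ := eq_zero_and_eq_of_sub_mul_eq_neg_mul_sub_mul hα
    (l₁ := l₃) (l₂ := l₄) (m₁ := m₃) (m₂ := m₄) (by linear_combination e₃ + α * e₂)
  exact ⟨hl₂, hl₄, hm₁, hm₃, hm₂, hm₄⟩
end

section
/- Let F be a field, E a field extension of F, V an E-vector space, and u₁, v₁, u₂, v₂ ∈ V linearly independent over E. Let α ∈ E not in the image of F, and suppose a, b ∈ F satisfy a·α² + b·α = 1 (so [F(α) : F] = 2). Set M = span_E{u₁ − α·v₁, u₂ − α·v₂}. Then for all ν₁, ν₂, ν₃, ν₄ ∈ F, putting u' = ν₁·u₁ + ν₂·v₁ + ν₃·u₂ + ν₄·v₂ and v' = (a·ν₂)·u₁ + (b·ν₂ + ν₁)·v₁ + (a·ν₄)·u₂ + (b·ν₄ + ν₃)·v₂, one has u' − α·v' ∈ M. (This is the core of the converse part of the regulus lemma: a 3-space containing three disjoint Π-lines of the same type S_α with [F(α) : F] = 2 whose extensions meet a common line M of the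 vertex is partitioned by Π-lines of type S_α.) -/
/-!
Modulo `u - α • v`, the vector `v` acts as `α⁻¹ • u`, and `a * α ^ 2 + b * α = 1` says exactly
that `α⁻¹ = a * α + b`. Hence `ν • u + μ • v - α • ((a * μ) • u + (b * μ + ν) • v)` is the
multiple `(ν - α * (a * μ)) • (u - α • v)`, and the theorem applies this to both pairs
`(u₁, v₁)` and `(u₂, v₂)`.
-/

theorem smul_add_smul_sub_smul_eq_smul_sub {R M : Type*} [CommRing R] [AddCommGroup M]
    [Module R M] {α a b : R} (h : a * α ^ 2 + b * α = 1) (ν μ : R) (u v : M) :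
    ν • u + μ • v - α • ((a * μ) • u + (b * μ + ν) • v) = (ν - α * (a * μ)) • (u - α • v) := by
  match_scalars
  · ring
  · linear_combination (-μ) * h

theorem stmt_11_general (F E : Type*) [Field F] [Field E] [Algebra F E]
    (V : Type*) [AddCommGroup V] [Module E V]
    (u₁ v₁ u₂ v₂ : V)
    (α : E)
    (a b : F) (hab : algebraMap F E a * α ^ 2 + algebraMap F E b * α = 1) :
    ∀ ν₁ ν₂ ν₃ ν₄ : F,
      (algebraMap F E ν₁ • u₁ + algebraMap F E ν₂ • v₁ +
        algebraMap F E ν₃ • u₂ + algebraMap F E ν₄ • v₂) -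
      α • (algebraMap F E (a * ν₂) • u₁ + algebraMap F E (b * ν₂ + ν₁) • v₁ +
        algebraMap F E (a * ν₄) • u₂ + algebraMap F E (b * ν₄ + ν₃) • v₂) ∈
      Submodule.span E {u₁ - α • v₁, u₂ - α • v₂} := by
  intro ν₁ ν₂ ν₃ ν₄
  set f := algebraMap F E
  have split_pairs :
      (f ν₁ • u₁ + f ν₂ • v₁ + f ν₃ • u₂ + f ν₄ • v₂) -
        α • (f (a * ν₂) • u₁ + f (b * ν₂ + ν₁) • v₁ + f (a * ν₄) • u₂ + f (b * ν₄ + ν₃) • v₂) =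
      (f ν₁ • u₁ + f ν₂ • v₁ - α • ((f a * f ν₂) • u₁ + (f b * f ν₂ + f ν₁) • v₁)) +
        (f ν₃ • u₂ + f ν₄ • v₂ - α • ((f a * f ν₄) • u₂ + (f b * f ν₄ + f ν₃) • v₂)) := by
    simp only [map_mul, map_add]
    module
  rw [split_pairs, smul_add_smul_sub_smul_eq_smul_sub hab, smul_add_smul_sub_smul_eq_smul_sub hab]
  exact add_mem (Submodule.smul_mem _ _ (Submodule.subset_span (by simp)))
    (Submodule.smul_mem _ _ (Submodule.subset_span (by simp)))

theorem stmt_11 (F E : Type*) [Field F] [Field E] [Algebra F E]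
    (V : Type*) [AddCommGroup V] [Module E V]
    (u₁ v₁ u₂ v₂ : V) (hind : LinearIndependent E ![u₁, v₁, u₂, v₂])
    (α : E) (hα : α ∉ Set.range (algebraMap F E))
    (a b : F) (hab : algebraMap F E a * α ^ 2 + algebraMap F E b * α = 1) :
    ∀ ν₁ ν₂ ν₃ ν₄ : F,
      (algebraMap F E ν₁ • u₁ + algebraMap F E ν₂ • v₁ +
        algebraMap F E ν₃ • u₂ + algebraMap F E ν₄ • v₂) -
      α • (algebraMap F E (a * ν₂) • u₁ + algebraMap F E (b * ν₂ + ν₁) • v₁ +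
        algebraMap F E (a * ν₄) • u₂ + algebraMap F E (b * ν₄ + ν₃) • v₂) ∈
      Submodule.span E {u₁ - α • v₁, u₂ - α • v₂} :=
  stmt_11_general F E V u₁ v₁ u₂ v₂ α a b hab
end

section
/- Let F be a finite field with exactly q elements, E a field extension of F of finite degree h with h ≥ 4, and U an F-subspace of E × E with dim_F U = 4 such that every point of the F-linear set L_U has weight 2 with respect to U, i.e. for every nonzero u ∈ U one has dim_F (U ∩ span_E{u}) = 2. Then h is even (equivalently, E contains an intermediate field of degree 2 over F). -/
/-!
For a nonzero `u ∈ U` let `S u = {λ ∈ E | λ u ∈ U}` (`U.multipliers E u`); it is an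
`F`-subspace of `E` containing `1`, of dimension the weight of `⟨u⟩`, say `k`, while
`dim U = 2k`. If `u, v ∈ U` are `E`-independent, then `U = S u • u ⊕ S v • v` by counting
dimensions, and comparing coefficients in `λ (u + v) = a u + b v` gives
`S (u + v) ⊆ S u ∩ S v`, hence `S u = S (u + v) = S v`. Applied to `x u` and `v` for `x ∈ S u`
this yields `S (x u) = S u`, i.e. `S u` is closed under multiplication. So `S u` is a subfield
of `E` of degree `k` over `F`, and `k ∣ [E : F]`.
-/

open Module

namespace Submodule

variable {F E V : Type*} [Field F] [Field E] [Algebra F E] [AddCommGroup V] [Module E V]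
  [Module F V] [IsScalarTower F E V]

variable (E) in
noncomputable def weight (U : Submodule F V) (u : V) : ℕ :=
  finrank F ↥(U ⊓ (span E {u}).restrictScalars F)

variable (E) in
def multipliers (U : Submodule F V) (u : V) : Submodule F E :=
  U.comap ((LinearMap.toSpanSingleton E V u).restrictScalars F)

variable {U : Submodule F V} {u v : V}

@[simp]
theorem mem_multipliers {c : E} : c ∈ U.multipliers E u ↔ c • u ∈ U := Iff.rfl

theorem one_mem_multipliers (hu : u ∈ U) : (1 : E) ∈ U.multipliers E u := by
  simpa using hu

theorem mem_multipliers_smul {x y : E} :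
    y ∈ U.multipliers E (x • u) ↔ y * x ∈ U.multipliers E u := by
  simp [mul_smul]

theorem finrank_multipliers (hu : u ≠ 0) :
    finrank F (U.multipliers E u) = U.weight E u := by
  let f := (LinearMap.toSpanSingleton E V u).restrictScalars F
  have hrange : LinearMap.range f = (span E {u}).restrictScalars F := by
    ext w
    simp [f, mem_span_singleton]
  have hmap : (U.multipliers E u).map f = U ⊓ (span E {u}).restrictScalars F := by
    rw [multipliers, map_comap_eq, hrange, inf_comm]
  rw [weight, ← hmap]
  exact (equivMapOfInjective f (smul_left_injective E hu) _).finrank_eq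

theorem exists_smul_add_smul_eq [FiniteDimensional F E] [FiniteDimensional F V]
    (hind : LinearIndependent E ![u, v])
    (hdim : finrank F U ≤ finrank F (U.multipliers E u) + finrank F (U.multipliers E v))
    {w : V} (hw : w ∈ U) :
    ∃ a ∈ U.multipliers E u, ∃ b ∈ U.multipliers E v, a • u + b • v = w := by
  let φ : (U.multipliers E u × U.multipliers E v) →ₗ[F] V :=
    (((LinearMap.toSpanSingleton E V u).restrictScalars F).comp (U.multipliers E u).subtype).coprod
      (((LinearMap.toSpanSingleton E V v).restrictScalars F).comp (U.multipliers E v).subtype)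
  have hφ : ∀ p, φ p = (p.1 : E) • u + (p.2 : E) • v := fun _ => rfl
  have hφ_inj : Function.Injective φ := by
    rintro ⟨a, b⟩ ⟨a', b'⟩ h
    obtain ⟨ha, hb⟩ := hind.eq_of_pair (by simpa only [hφ] using h)
    exact Prod.ext (Subtype.ext ha) (Subtype.ext hb)
  have hrange : LinearMap.range φ = U := by
    refine eq_of_le_of_finrank_le ?_ ?_
    · rintro _ ⟨p, rfl⟩
      exact U.add_mem p.1.2 p.2.2
    · rwa [LinearMap.finrank_range_of_inj hφ_inj, finrank_prod]
  obtain ⟨⟨a, b⟩, rfl⟩ := hrange.ge hw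
  exact ⟨a, a.2, b, b.2, rfl⟩

section ConstantWeight

variable {k : ℕ} (hU : finrank F U = 2 * k) (hwt : ∀ w ∈ U, w ≠ 0 → U.weight E w = k)
include hU hwt

theorem exists_linearIndependent (hk : k ≠ 0) (hu : u ∈ U) (hu0 : u ≠ 0) :
    ∃ v ∈ U, LinearIndependent E ![u, v] := by
  by_contra! h
  have hle : U ≤ (span E {u}).restrictScalars F := fun v hv => by
    by_contra hv'
    refine h v hv ((LinearIndependent.pair_iff' hu0).mpr fun a ha => hv' ?_)
    exact mem_span_singleton.mpr ⟨a, ha⟩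
  have := hwt u hu hu0
  rw [weight, inf_eq_left.mpr hle, hU] at this
  omega

variable [FiniteDimensional F E] [FiniteDimensional F V]

theorem multipliers_eq_of_linearIndependent (hind : LinearIndependent E ![u, v]) (hu : u ∈ U)
    (hv : v ∈ U) : U.multipliers E u = U.multipliers E v := by
  have hu0 : u ≠ 0 := by simpa using hind.ne_zero 0
  have hv0 : v ≠ 0 := by simpa using hind.ne_zero 1
  have huv0 : u + v ≠ 0 := fun h =>
    one_ne_zero (LinearIndependent.pair_iff.mp hind 1 1 (by simpa using h)).1
  have hdim : ∀ w ∈ U, w ≠ 0 → finrank F (U.multipliers E w) = k := fun w hw hw0 =>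
    (finrank_multipliers hw0).trans (hwt w hw hw0)
  have hsub : U.multipliers E (u + v) ≤ U.multipliers E u ⊓ U.multipliers E v := by
    intro c hc
    obtain ⟨a, ha, b, hb, hab⟩ := exists_smul_add_smul_eq hind
      (by rw [hdim u hu hu0, hdim v hv hv0, hU]; omega) hc
    obtain ⟨rfl, rfl⟩ := hind.eq_of_pair (hab.trans (smul_add c u v))
    exact ⟨ha, hb⟩
  have hk : finrank F (U.multipliers E (u + v)) = k := hdim _ (U.add_mem hu hv) huv0
  rw [← eq_of_le_of_finrank_eq (hsub.trans inf_le_left) (by rw [hk, hdim u hu hu0]),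
    eq_of_le_of_finrank_eq (hsub.trans inf_le_right) (by rw [hk, hdim v hv hv0])]

theorem mul_mem_multipliers (hind : LinearIndependent E ![u, v]) (hu : u ∈ U) (hv : v ∈ U)
    {x y : E} (hx : x ∈ U.multipliers E u) (hy : y ∈ U.multipliers E u) :
    x * y ∈ U.multipliers E u := by
  rcases eq_or_ne x 0 with rfl | hx0
  · simp
  have hu0 : u ≠ 0 := by simpa using hind.ne_zero 0
  have hxind : LinearIndependent E ![x • u, v] := by
    rw [LinearIndependent.pair_iff' (smul_ne_zero hx0 hu0)]
    intro a
    simpa [smul_smul] using (LinearIndependent.pair_iff' hu0).mp hind (a * x)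
  have hS : U.multipliers E (x • u) = U.multipliers E u :=
    (multipliers_eq_of_linearIndependent hU hwt hxind hx hv).trans
      (multipliers_eq_of_linearIndependent hU hwt hind hu hv).symm
  rw [mul_comm, ← mem_multipliers_smul, hS]
  exact hy

theorem dvd_finrank_of_forall_weight_eq (hk : k ≠ 0) : k ∣ finrank F E := by
  obtain ⟨u, hu, hu0⟩ := exists_mem_ne_zero_of_ne_bot (p := U) fun h => by
    rw [h, finrank_bot] at hU
    omega
  obtain ⟨v, hv, hind⟩ := exists_linearIndependent hU hwt hk hu hu0
  let K : Subalgebra F E := (U.multipliers E u).toSubalgebra (one_mem_multipliers hu)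
    (fun _ _ => mul_mem_multipliers hU hwt hind hu hv)
  let L : IntermediateField F E := K.toIntermediateField' (Subalgebra.isField_of_algebraic K)
  have hL : finrank F L = k := (finrank_multipliers hu0).trans (hwt u hu hu0)
  exact hL ▸ finrank_dvd_finrank_right F L E

end ConstantWeight

end Submodule

theorem stmt_12_general (F E : Type*) [Field F] [Field E] [Algebra F E]
    [FiniteDimensional F E] (h : ℕ)
    (hh : Module.finrank F E = h)
    (U : Submodule F (E × E)) (hU : Module.finrank F U = 4)
    (hwt : ∀ u ∈ U, u ≠ 0 →
      Module.finrank F ↥(U ⊓ (Submodule.span E {u}).restrictScalars F) = 2) :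
    Even h :=
  hh ▸ even_iff_two_dvd.mpr (U.dvd_finrank_of_forall_weight_eq hU hwt two_ne_zero)

theorem stmt_12 (F E : Type*) [Field F] [Fintype F] [Field E] [Algebra F E]
    [FiniteDimensional F E] (q h : ℕ) (hq : Fintype.card F = q)
    (hh : Module.finrank F E = h) (hh4 : 4 ≤ h)
    (U : Submodule F (E × E)) (hU : Module.finrank F U = 4)
    (hwt : ∀ u ∈ U, u ≠ 0 →
      Module.finrank F ↥(U ⊓ (Submodule.span E {u}).restrictScalars F) = 2) :
    Even h :=
  stmt_12_general F E h hh U hU hwt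
end

section
/- Let F be a finite field with exactly q elements, E a field extension of F of finite degree h, and U an F-subspace of E × E with dim_F U = k, where 5 ≤ k ≤ h. Suppose there is a nonzero v₀ ∈ U with dim_F (U ∩ span_E{v₀}) = k − 2, and that every nonzero u ∈ U with u ∉ span_E{v₀} satisfies dim_F (U ∩ span_E{u}) = 2 (i.e. L_U has one point of weight k − 2 and all other points of weight 2). Then there exists a natural number s with 1 < s, s dividing k − 2, and s dividing h; equivalently, there is an intermediate field K of E/F with 1 < [K : F] and [K : F] dividing k − 2. -/
/-!
Let `W = {a ∈ E | a • v₀ ∈ U}`, an `F`-space of dimension `k - 2`, and fix `u₀ ∈ U` off `⟨v₀⟩`.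
The `q ^ (k - 2)` points `⟨u₀ + w • v₀⟩`, `w ∈ W`, are distinct and each carries `q ^ 2 - 1`
nonzero vectors of `U`; this accounts for all `q ^ k - q ^ (k - 2)` vectors of `U` off `⟨v₀⟩`.
As `⟨u₀⟩` has weight `2`, some `λ ∉ F` has `λ • u₀ ∈ U`, and writing `λ • u₀ + w • v₀` as a
multiple of some `u₀ + w' • v₀` forces `w' = λ⁻¹ * w`. So `λ⁻¹` lies in the field
`K = {c | c • W ⊆ W}`, which is therefore a proper extension of `F`, and `[K : F]` divides both
`dim_F W = k - 2` (as `W` is a `K`-space) and `h`.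
-/

open Module Submodule

theorem IntermediateField.one_lt_finrank_of_mem {F E : Type*} [Field F] [Field E] [Algebra F E]
    {K : IntermediateField F E} [FiniteDimensional F K] {x : E} (hxK : x ∈ K)
    (hxF : x ∉ (⊥ : IntermediateField F E)) : 1 < finrank F K := by
  have hK : K ≠ ⊥ := by rintro rfl; exact hxF hxK
  have := finrank_pos (R := F) (M := K)
  have := mt IntermediateField.finrank_eq_one_iff.mp hK
  omega

namespace Submodule

variable {F E : Type*} [Field F] [Field E] [Algebra F E]

def stabilizerSubalgebra (W : Submodule F E) : Subalgebra F E where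
  carrier := {c | ∀ w ∈ W, c * w ∈ W}
  mul_mem' ha hb w hw := mul_assoc _ _ w ▸ ha _ (hb w hw)
  add_mem' ha hb w hw := add_mul _ _ w ▸ W.add_mem (ha w hw) (hb w hw)
  algebraMap_mem' c w hw := by simpa [← Algebra.smul_def] using W.smul_mem c hw

section StabilizerField

variable [Algebra.IsAlgebraic F E]

def stabilizerField (W : Submodule F E) : IntermediateField F E :=
  Subalgebra.IsAlgebraic.toIntermediateField (S := W.stabilizerSubalgebra)
    fun x _ ↦ Algebra.IsAlgebraic.isAlgebraic x

theorem mem_stabilizerField {W : Submodule F E} {c : E} :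
    c ∈ W.stabilizerField ↔ ∀ w ∈ W, c * w ∈ W := Iff.rfl

def stabilizerFieldSubmodule (W : Submodule F E) :
    Submodule W.stabilizerField E where
  carrier := W
  add_mem' := W.add_mem
  zero_mem' := W.zero_mem
  smul_mem' c _ hw := mem_stabilizerField.mp c.2 _ hw

theorem finrank_stabilizerField_dvd (W : Submodule F E) :
    finrank F W.stabilizerField ∣ finrank F W :=
  Dvd.intro _ ((finrank_mul_finrank F W.stabilizerField W.stabilizerFieldSubmodule).trans
    ((restrictScalarsEquiv F _ E W.stabilizerFieldSubmodule).restrictScalars F).finrank_eq)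

end StabilizerField

theorem exists_mem_notMem_bot_of_one_lt_finrank [FiniteDimensional F E] {V : Submodule F E}
    (hV : 1 < finrank F V) :
    ∃ x ∈ V, x ∉ (⊥ : IntermediateField F E) := by
  by_contra! hle
  have := finrank_mono (show V ≤ (⊥ : IntermediateField F E).toSubalgebra.toSubmodule from hle)
  rw [Subalgebra.finrank_toSubmodule, IntermediateField.finrank_eq_finrank_subalgebra,
    IntermediateField.finrank_bot] at this
  omega

section LineScalars

variable {M : Type*} [AddCommGroup M] [Module E M] [Module F M] [IsScalarTower F E M]

variable (E) in
/-- For `v ≠ 0`, this is the `F`-space `U ∩ ⟨v⟩_E` read in the coordinate `a` of `a • v`. -/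
def lineScalars (U : Submodule F M) (v : M) : Submodule F E :=
  U.comap ((LinearMap.toSpanSingleton E M v).restrictScalars F)

variable {U : Submodule F M} {u₀ v₀ : M}

@[simp]
theorem mem_lineScalars {v : M} {a : E} : a ∈ U.lineScalars E v ↔ a • v ∈ U := Iff.rfl

theorem finrank_lineScalars {v : M} (hv : v ≠ 0) :
    finrank F (U.lineScalars E v) = finrank F ↥(U ⊓ (span E {v}).restrictScalars F) := by
  set f := (LinearMap.toSpanSingleton E M v).restrictScalars F
  have hf : Function.Injective f := smul_left_injective E hv
  have hrange : LinearMap.range f = (span E {v}).restrictScalars F := by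
    simp [f, LinearMap.range_restrictScalars, LinearMap.range_toSpanSingleton]
  rw [(equivMapOfInjective f hf (U.lineScalars E v)).finrank_eq, lineScalars, map_comap_eq, hrange,
    inf_comm]

theorem mem_span_add_smul {w : E} {x : M} :
    x ∈ span E {u₀ + w • v₀} ↔ ∃ a : E, a • u₀ + (a * w) • v₀ = x := by
  simp only [mem_span_singleton, smul_add, smul_smul]

theorem ncard_coe_eq_pow_finrank [Finite M] (V : Submodule F M) :
    (V : Set M).ncard = Nat.card F ^ finrank F V := by
  rw [← Nat.card_coe_set_eq]
  exact natCard_eq_pow_finrank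

theorem eq_zero_of_smul_add_smul_mem_span (hind : LinearIndependent E ![u₀, v₀]) {a b : E}
    (h : a • u₀ + b • v₀ ∈ span E {v₀}) : a = 0 := by
  obtain ⟨c, hc⟩ := mem_span_singleton.mp h
  exact (hind.eq_of_pair (t := b) (s' := 0) (t' := c) (by rw [zero_smul, zero_add, hc])).1

variable (E) in
def pointVectors (U : Submodule F M) (x : M) : Set M :=
  ((U ⊓ (span E {x}).restrictScalars F : Submodule F M) : Set M) \ {0}

theorem mem_pointVectors {x y : M} :
    y ∈ U.pointVectors E x ↔ y ∈ U ∧ y ∈ span E {x} ∧ y ≠ 0 := by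
  simp [pointVectors, and_assoc]

theorem ncard_pointVectors [Finite M] (x : M) :
    (U.pointVectors E x).ncard =
      Nat.card F ^ finrank F ↥(U ⊓ (span E {x}).restrictScalars F) - 1 := by
  rw [pointVectors, Set.ncard_sdiff_singleton_of_mem (zero_mem _), ncard_coe_eq_pow_finrank]

theorem notMem_span_of_mem_pointVectors_add_smul (hind : LinearIndependent E ![u₀, v₀]) {w : E}
    {y : M} (hy : y ∈ U.pointVectors E (u₀ + w • v₀)) : y ∉ span E {v₀} := by
  obtain ⟨-, hspan, hy0⟩ := mem_pointVectors.mp hy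
  obtain ⟨a, rfl⟩ := mem_span_add_smul.mp hspan
  refine fun h ↦ hy0 ?_
  rw [eq_zero_of_smul_add_smul_mem_span hind h, zero_smul, zero_mul, zero_smul, add_zero]

theorem pairwiseDisjoint_pointVectors_add_smul (hind : LinearIndependent E ![u₀, v₀])
    (s : Set E) : s.PairwiseDisjoint fun w ↦ U.pointVectors E (u₀ + w • v₀) := by
  intro w _ w' _ hne
  refine Set.disjoint_left.mpr fun y hy hy' ↦ hne ?_
  obtain ⟨-, hspan, hy0⟩ := mem_pointVectors.mp hy
  obtain ⟨a, rfl⟩ := mem_span_add_smul.mp hspan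
  obtain ⟨a', ha'⟩ := mem_span_add_smul.mp (mem_pointVectors.mp hy').2.1
  have ha : a ≠ 0 := by rintro rfl; simp at hy0
  obtain ⟨rfl, haw⟩ := hind.eq_of_pair ha'
  exact mul_left_cancel₀ ha haw.symm

theorem exists_mem_lineScalars_mem_span_add_smul [Finite E] [Finite M] {d : ℕ}
    (hind : LinearIndependent E ![u₀, v₀]) (hu₀ : u₀ ∈ U)
    (hU : finrank F U = finrank F (U.lineScalars E v₀) + d)
    (hwt : ∀ u ∈ U, u ≠ 0 → u ∉ span E {v₀} →
      finrank F ↥(U ⊓ (span E {u}).restrictScalars F) = d)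
    {x : M} (hx : x ∈ U) (hxv : x ∉ span E {v₀}) :
    ∃ w ∈ U.lineScalars E v₀, x ∈ span E {u₀ + w • v₀} := by
  set W := U.lineScalars E v₀
  set q := Nat.card F
  let L : E → Set M := fun w ↦ U.pointVectors E (u₀ + w • v₀)
  let X : Set M := (U : Set M) \ ((U ⊓ (span E {v₀}).restrictScalars F : Submodule F M) : Set M)
  have hLX : ⋃ w ∈ (W : Set E), L w ⊆ X := Set.iUnion₂_subset fun _ _ y hy ↦
    ⟨(mem_pointVectors.mp hy).1, fun h ↦ notMem_span_of_mem_pointVectors_add_smul hind hy h.2⟩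
  have hcardL : ∀ w ∈ W, (L w).ncard = q ^ d - 1 := by
    intro w hw
    have hoff : u₀ + w • v₀ ∉ span E {v₀} := fun h ↦
      one_ne_zero (eq_zero_of_smul_add_smul_mem_span hind (a := 1) (by rwa [one_smul]))
    rw [ncard_pointVectors, hwt _ (U.add_mem hu₀ (mem_lineScalars.mp hw))
      (fun h ↦ hoff (h ▸ zero_mem _)) hoff]
  have hcard : X.ncard = (⋃ w ∈ (W : Set E), L w).ncard := calc
    X.ncard = q ^ (finrank F W + d) - q ^ finrank F W := by
      rw [Set.ncard_sdiff (fun y hy ↦ hy.1), ncard_coe_eq_pow_finrank, ncard_coe_eq_pow_finrank,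
        hU, finrank_lineScalars (v := v₀) (hind.ne_zero 1)]
    _ = (∑ᶠ w ∈ (W : Set E), 1) * (q ^ d - 1) := by
      rw [finsum_one, ncard_coe_eq_pow_finrank, pow_add, Nat.mul_sub, mul_one]
    _ = (⋃ w ∈ (W : Set E), L w).ncard := by
      rw [(Set.toFinite _).ncard_biUnion (fun _ _ ↦ Set.toFinite _)
        (pairwiseDisjoint_pointVectors_add_smul hind _), finsum_mem_mul, one_mul]
      exact finsum_mem_congr rfl fun w hw ↦ (hcardL w hw).symm
  have hxX : x ∈ ⋃ w ∈ (W : Set E), L w :=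
    (Set.eq_of_subset_of_ncard_le hLX hcard.le).symm ▸ ⟨hx, fun h ↦ hxv h.2⟩
  obtain ⟨w, hw, hxw⟩ := Set.mem_iUnion₂.mp hxX
  exact ⟨w, hw, (mem_pointVectors.mp hxw).2.1⟩

theorem inv_mem_stabilizerField_lineScalars [Finite E] [Finite M] {d : ℕ}
    (hind : LinearIndependent E ![u₀, v₀]) (hu₀ : u₀ ∈ U)
    (hU : finrank F U = finrank F (U.lineScalars E v₀) + d)
    (hwt : ∀ u ∈ U, u ≠ 0 → u ∉ span E {v₀} →
      finrank F ↥(U ⊓ (span E {u}).restrictScalars F) = d)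
    {l : E} (hl : l • u₀ ∈ U) (hl0 : l ≠ 0) :
    l⁻¹ ∈ (U.lineScalars E v₀).stabilizerField := by
  intro w hw
  have hoff : l • u₀ + w • v₀ ∉ span E {v₀} := fun h ↦
    hl0 (eq_zero_of_smul_add_smul_mem_span hind h)
  obtain ⟨w', hw', hspan⟩ := exists_mem_lineScalars_mem_span_add_smul hind hu₀ hU hwt
    (U.add_mem hl (mem_lineScalars.mp hw)) hoff
  obtain ⟨a, ha⟩ := mem_span_add_smul.mp hspan
  obtain ⟨rfl, haw⟩ := hind.eq_of_pair ha
  rwa [← haw, inv_mul_cancel_left₀ hl0]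

end LineScalars

end Submodule

theorem stmt_13_general (F E : Type*) [Field F] [Fintype F] [Field E] [Algebra F E]
    [FiniteDimensional F E] (h k : ℕ)
    (hh : Module.finrank F E = h) (hk5 : 5 ≤ k)
    (U : Submodule F (E × E)) (hU : Module.finrank F U = k)
    (v₀ : E × E) (hv₀ : v₀ ≠ 0)
    (hv₀wt : Module.finrank F ↥(U ⊓ (Submodule.span E {v₀}).restrictScalars F) = k - 2)
    (hwt : ∀ u ∈ U, u ≠ 0 → u ∉ Submodule.span E {v₀} →
      Module.finrank F ↥(U ⊓ (Submodule.span E {u}).restrictScalars F) = 2) :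
    ∃ s : ℕ, 1 < s ∧ s ∣ k - 2 ∧ s ∣ h ∧
      ∃ K : IntermediateField F E, Module.finrank F K = s := by
  have : Finite E := Module.finite_of_finite F
  have hW : finrank F (U.lineScalars E v₀) = k - 2 := (finrank_lineScalars hv₀).trans hv₀wt
  obtain ⟨u₀, hu₀U, hu₀⟩ : ∃ u₀ ∈ U, u₀ ∉ span E {v₀} := SetLike.not_le_iff_exists.mp fun hle ↦ by
    rw [inf_eq_left.mpr hle, hU] at hv₀wt
    omega
  have hu₀0 : u₀ ≠ 0 := fun h ↦ hu₀ (h ▸ zero_mem _)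
  have hind : LinearIndependent E ![u₀, v₀] :=
    LinearIndependent.pair_symm_iff.mpr <| (LinearIndependent.pair_iff' hv₀).mpr fun a ha ↦
      hu₀ (ha ▸ smul_mem _ a (mem_span_singleton_self v₀))
  obtain ⟨l, hl, hlF⟩ := exists_mem_notMem_bot_of_one_lt_finrank (V := U.lineScalars E u₀)
    (by rw [finrank_lineScalars hu₀0, hwt u₀ hu₀U hu₀0 hu₀]; norm_num)
  have hlK := inv_mem_stabilizerField_lineScalars hind hu₀U (by omega) hwt hl
    (by rintro rfl; exact hlF (zero_mem _))
  set K := (U.lineScalars E v₀).stabilizerField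
  refine ⟨finrank F K, K.one_lt_finrank_of_mem hlK fun h ↦ hlF (inv_inv l ▸ inv_mem h), ?_, ?_,
    K, rfl⟩
  · exact hW ▸ finrank_stabilizerField_dvd _
  · exact hh ▸ Dvd.intro _ (finrank_mul_finrank F K E)

theorem stmt_13 (F E : Type*) [Field F] [Fintype F] [Field E] [Algebra F E]
    [FiniteDimensional F E] (q h k : ℕ) (hq : Fintype.card F = q)
    (hh : Module.finrank F E = h) (hk5 : 5 ≤ k) (hkh : k ≤ h)
    (U : Submodule F (E × E)) (hU : Module.finrank F U = k)
    (v₀ : E × E) (hv₀U : v₀ ∈ U) (hv₀ : v₀ ≠ 0)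
    (hv₀wt : Module.finrank F ↥(U ⊓ (Submodule.span E {v₀}).restrictScalars F) = k - 2)
    (hwt : ∀ u ∈ U, u ≠ 0 → u ∉ Submodule.span E {v₀} →
      Module.finrank F ↥(U ⊓ (Submodule.span E {u}).restrictScalars F) = 2) :
    ∃ s : ℕ, 1 < s ∧ s ∣ k - 2 ∧ s ∣ h ∧
      ∃ K : IntermediateField F E, Module.finrank F K = s :=
  stmt_13_general F E h k hh hk5 U hU v₀ hv₀ hv₀wt hwt
end

section
/- Let F be a field, E a field extension of F, K an intermediate field of E/F, α ∈ K with K = F(α) (K is generated over F by α), r ≥ 1, and c : Fin r → E any family of elements of E. Let U be the F-subspace of E × E consisting of all vectors (∑_{i} c i · γ i, λ₂ + α · λ₁) with γ : Fin r → K and λ₁, λ₂ ∈ F (scalars viewed in E via the algebra maps), and let W be the F-subspace of E × E consisting of all vectors (∑_{i} c i · γ i, δ) with γ : Fin r → K and δ ∈ K. Then W is K-linear and L_U = L_W; in particular, the F-linear set L_U has geometric field of linearity K. -/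
/-- The `F`-linear set of projective points of `PG(1,E)` determined by the `F`-subspace `U`
of `E × E`: the `E`-spans of the nonzero vectors of `U`. -/
def LSet (F : Type*) {E : Type*} [Field F] [Field E] [Algebra F E]
    (U : Submodule F (E × E)) : Set (Submodule E (E × E)) :=
  {p | ∃ u ∈ U, u ≠ 0 ∧ p = Submodule.span E {u}}

section LSet

variable {F E : Type*} [Field F] [Field E] [Algebra F E]

theorem LSet_mono {U W : Submodule F (E × E)} (h : U ≤ W) : LSet F U ⊆ LSet F W := by
  rintro p ⟨u, hu, hu0, rfl⟩
  exact ⟨u, h hu, hu0, rfl⟩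

theorem LSet_subset_of_exists_smul_mem {U W : Submodule F (E × E)}
    (h : ∀ w ∈ W, w ≠ 0 → ∃ a : E, a ≠ 0 ∧ a • w ∈ U) : LSet F W ⊆ LSet F U := by
  rintro p ⟨w, hw, hw0, rfl⟩
  obtain ⟨a, ha, haw⟩ := h w hw hw0
  exact ⟨a • w, haw, smul_ne_zero ha hw0,
    (Submodule.span_singleton_smul_eq (IsUnit.mk0 a ha) w).symm⟩

end LSet

theorem IntermediateField.smul_sum_mul_prod {F E ι : Type*} [Field F] [Field E] [Algebra F E]
    [Fintype ι] {K : IntermediateField F E} (c : ι → E) (x : K) (γ : ι → K) (δ : K) :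
    (x : E) • (∑ i, c i * (γ i : E), (δ : E)) =
      (∑ i, c i * ((x * γ i : K) : E), ((x * δ : K) : E)) := by
  simp only [Prod.smul_mk, smul_eq_mul, Finset.mul_sum, MulMemClass.coe_mul]
  congr 1
  exact Finset.sum_congr rfl fun i _ => by ring

theorem stmt_14_general (F E : Type*) [Field F] [Field E] [Algebra F E]
    (K : IntermediateField F E) (α : E) (hαK : α ∈ K)
    (r : ℕ) (c : Fin r → E)
    (U : Submodule F (E × E))
    (hUset : (U : Set (E × E)) =
      {p | ∃ γ : Fin r → K, ∃ l₁ l₂ : F,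
        p = (∑ i, c i * (γ i : E), algebraMap F E l₂ + α * algebraMap F E l₁)})
    (W : Submodule F (E × E))
    (hWset : (W : Set (E × E)) =
      {p | ∃ γ : Fin r → K, ∃ δ : K, p = (∑ i, c i * (γ i : E), (δ : E))}) :
    (∀ x ∈ K, ∀ w ∈ W, x • w ∈ W) ∧ LSet F W = LSet F U := by
  have hU := fun u => SetLike.mem_coe.symm.trans (Set.ext_iff.mp hUset u)
  have hW := fun w => SetLike.mem_coe.symm.trans (Set.ext_iff.mp hWset w)
  refine ⟨fun x hx w hw => ?_, ?_⟩
  · obtain ⟨γ, δ, rfl⟩ := (hW w).mp hw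
    exact (hW _).mpr ⟨_, _, IntermediateField.smul_sum_mul_prod c ⟨x, hx⟩ γ δ⟩
  refine (LSet_subset_of_exists_smul_mem fun w hw hw0 => ?_).antisymm
    (LSet_mono fun u hu => ?_)
  · obtain ⟨γ, δ, rfl⟩ := (hW w).mp hw
    by_cases hδ : δ = 0
    · refine ⟨1, one_ne_zero, (hU _).mpr ⟨γ, 0, 0, ?_⟩⟩
      simp [hδ]
    -- rescaling by `δ⁻¹` makes the second coordinate `1 ∈ F`
    refine ⟨(δ⁻¹ : K), by simpa using hδ, (hU _).mpr ⟨fun i => δ⁻¹ * γ i, 0, 1, ?_⟩⟩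
    rw [IntermediateField.smul_sum_mul_prod, inv_mul_cancel₀ hδ]
    simp
  · obtain ⟨γ, l₁, l₂, rfl⟩ := (hU u).mp hu
    exact (hW _).mpr ⟨γ, ⟨_, K.add_mem (K.algebraMap_mem l₂)
      (K.mul_mem hαK (K.algebraMap_mem l₁))⟩, rfl⟩

theorem stmt_14 (F E : Type*) [Field F] [Field E] [Algebra F E]
    (K : IntermediateField F E) (α : E) (hαK : α ∈ K)
    (hK : K = IntermediateField.adjoin F {α})
    (r : ℕ) (hr : 1 ≤ r) (c : Fin r → E)
    (U : Submodule F (E × E))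
    (hUset : (U : Set (E × E)) =
      {p | ∃ γ : Fin r → K, ∃ l₁ l₂ : F,
        p = (∑ i, c i * (γ i : E), algebraMap F E l₂ + α * algebraMap F E l₁)})
    (W : Submodule F (E × E))
    (hWset : (W : Set (E × E)) =
      {p | ∃ γ : Fin r → K, ∃ δ : K, p = (∑ i, c i * (γ i : E), (δ : E))}) :
    (∀ x ∈ K, ∀ w ∈ W, x • w ∈ W) ∧ LSet F W = LSet F U :=
  stmt_14_general F E K α hαK r c U hUset W hWset
end

section
/- Let F be a finite field with exactly q elements, E a field extension of F of finite degree, K an intermediate field of E/F with [K : F] = s, α ∈ K not in the image of F with K = F(α), r ≥ 1, and c : Fin r → E a family that is linearly independent over K. Let U be the F-subspace of E × E consisting of all vectors (∑_{i} c i · γ i, λ₂ + α · λ₁) with γ : Fin r → K and λ₁, λ₂ ∈ F. Then dim_F U = r·s + 2, the F-linear set L_U has exactly q^{r·s} + 1 points, the point spanned by (1, 0) belongs to L_U and has weight r·s with respect to U, and every other point of L_U has weight 2 with respect to U. (This shows the linear sets produced by the paper's Construction are linear sets of rank r·s + 2 with one point of weight r·s and all other points of weight 2.) -/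
open Module Submodule

theorem Submodule.finrank_prod {R M N : Type*} [DivisionRing R] [AddCommGroup M] [Module R M]
    [AddCommGroup N] [Module R N] (p : Submodule R M) (q : Submodule R N)
    [Module.Finite R p] [Module.Finite R q] :
    finrank R (p.prod q) = finrank R p + finrank R q := by
  have hrange : p.prod q = (p.subtype.prodMap q.subtype).range := by
    rw [LinearMap.range_prodMap, range_subtype, range_subtype]
  have hinj : Function.Injective (p.subtype.prodMap q.subtype) := by
    rw [LinearMap.coe_prodMap]
    exact p.injective_subtype.prodMap q.injective_subtype
  rw [hrange, LinearMap.finrank_range_of_inj hinj, Module.finrank_prod]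

theorem mem_span_one_zero_iff {R M : Type*} [Semiring R] [AddCommMonoid M] [Module R M]
    {v : R × M} : v ∈ R ∙ ((1 : R), (0 : M)) ↔ v.2 = 0 := by
  rw [mem_span_singleton]
  constructor
  · rintro ⟨a, rfl⟩
    simp
  · intro h
    exact ⟨v.1, Prod.ext (by simp) (by simp [h])⟩

section ProjectiveLine

variable {E : Type*} [Field E]

theorem span_eq_span_one_zero {u : E × E} (hu : u ≠ 0) (hu2 : u.2 = 0) :
    E ∙ u = E ∙ ((1 : E), (0 : E)) := by
  have hu1 : u.1 ≠ 0 := fun h => hu (Prod.ext h hu2)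
  conv_lhs => rw [show u = u.1 • ((1 : E), (0 : E)) from Prod.ext (by simp) (by simp [hu2])]
  exact span_singleton_smul_eq (IsUnit.mk0 _ hu1) _

theorem span_eq_span_inv_mul_one {u : E × E} (hu2 : u.2 ≠ 0) :
    E ∙ u = E ∙ (u.2⁻¹ * u.1, (1 : E)) := by
  conv_lhs => rw [show u = u.2 • (u.2⁻¹ * u.1, (1 : E)) from Prod.ext (by simp [hu2]) (by simp)]
  exact span_singleton_smul_eq (IsUnit.mk0 _ hu2) _

theorem span_pair_one_injective : Function.Injective fun z : E => E ∙ (z, (1 : E)) := by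
  intro z z' h
  obtain ⟨t, ht⟩ := span_singleton_eq_span_singleton.mp h
  have ht1 : (t : E) = 1 := by simpa [Units.smul_def] using congrArg Prod.snd ht
  simpa [Units.smul_def, ht1] using congrArg Prod.fst ht

theorem span_one_zero_ne_span_pair_one (z : E) :
    E ∙ ((1 : E), (0 : E)) ≠ E ∙ (z, (1 : E)) := by
  intro h
  obtain ⟨t, ht⟩ := span_singleton_eq_span_singleton.mp h
  simpa [Units.smul_def] using congrArg Prod.snd ht

end ProjectiveLine

section Construction

variable {F E : Type*} [Field F] [Field E] [Algebra F E] {K : IntermediateField F E}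
  {C : Submodule K E} {W : Submodule F E}

theorem mul_mem_of_mem_intermediateField {k x : E} (hk : k ∈ K) (hx : x ∈ C) : k * x ∈ C :=
  C.smul_mem ⟨k, hk⟩ hx

theorem finrank_restrictScalars_eq_mul (C : Submodule K E) :
    finrank F (C.restrictScalars F) = finrank F K * finrank K C := by
  rw [((restrictScalarsEquiv F K E C).restrictScalars F).finrank_eq, finrank_mul_finrank]

theorem smul_mem_prod_iff (hWK : W ≤ Subalgebra.toSubmodule K.toSubalgebra) {u : E × E}
    (hu : u ∈ (C.restrictScalars F).prod W) (hu2 : u.2 ≠ 0) (t : E) :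
    t • u ∈ (C.restrictScalars F).prod W ↔ t * u.2 ∈ W := by
  refine ⟨fun h => (mem_prod.mp h).2, fun h => mem_prod.mpr ⟨?_, h⟩⟩
  have ht : t ∈ K := by
    simpa [hu2] using K.mul_mem (hWK h) (K.inv_mem (hWK (mem_prod.mp hu).2))
  exact mul_mem_of_mem_intermediateField ht (mem_prod.mp hu).1

theorem finrank_inf_span_one_zero [FiniteDimensional F E] :
    finrank F ↥((C.restrictScalars F).prod W ⊓ (E ∙ ((1 : E), (0 : E))).restrictScalars F) =
      finrank F (C.restrictScalars F) := by
  have heq : (C.restrictScalars F).prod W ⊓ (E ∙ ((1 : E), (0 : E))).restrictScalars F =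
      (C.restrictScalars F).prod ⊥ := by
    ext v
    simp only [mem_inf, mem_prod, restrictScalars_mem, mem_span_one_zero_iff, mem_bot]
    constructor
    · rintro ⟨⟨h1, -⟩, h2⟩
      exact ⟨h1, h2⟩
    · rintro ⟨h1, h2⟩
      exact ⟨⟨h1, h2 ▸ W.zero_mem⟩, h2⟩
  rw [heq, Submodule.finrank_prod, finrank_bot, add_zero]

theorem finrank_inf_span_of_snd_ne_zero [FiniteDimensional F E]
    (hWK : W ≤ Subalgebra.toSubmodule K.toSubalgebra) {u : E × E}
    (hu : u ∈ (C.restrictScalars F).prod W) (hu2 : u.2 ≠ 0) :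
    finrank F ↥((C.restrictScalars F).prod W ⊓ (E ∙ u).restrictScalars F) = finrank F W := by
  have hu0 : u ≠ 0 := fun h => hu2 (by simp [h])
  let φ : E →ₗ[F] E × E :=
    (LinearMap.toSpanSingleton E (E × E) u).restrictScalars F ∘ₗ LinearMap.mulRight F u.2⁻¹
  have hφ (t : E) : φ t = (t * u.2⁻¹) • u := rfl
  have hφinj : Function.Injective φ := fun a b h => by
    rw [hφ, hφ] at h
    simpa [hu2] using smul_left_injective E hu0 h
  have heq : (C.restrictScalars F).prod W ⊓ (E ∙ u).restrictScalars F = W.map φ := by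
    ext v
    simp only [mem_inf, restrictScalars_mem, mem_span_singleton, mem_map, hφ]
    constructor
    · rintro ⟨hv, t, rfl⟩
      exact ⟨t * u.2, (smul_mem_prod_iff hWK hu hu2 t).mp hv, by simp [hu2]⟩
    · rintro ⟨w, hw, rfl⟩
      exact ⟨(smul_mem_prod_iff hWK hu hu2 _).mpr (by simpa [hu2] using hw), _, rfl⟩
  rw [heq, (equivMapOfInjective φ hφinj W).finrank_eq.symm]

theorem LSet_prod_eq (hWK : W ≤ Subalgebra.toSubmodule K.toSubalgebra) (hC : C ≠ ⊥)
    (hW : W ≠ ⊥) :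
    LSet F ((C.restrictScalars F).prod W) =
      insert (E ∙ ((1 : E), (0 : E))) ((fun z : E => E ∙ (z, (1 : E))) '' C) := by
  ext p
  constructor
  · rintro ⟨u, hu, hu0, rfl⟩
    by_cases hu2 : u.2 = 0
    · exact Or.inl (span_eq_span_one_zero hu0 hu2)
    · refine Or.inr ⟨u.2⁻¹ * u.1, ?_, (span_eq_span_inv_mul_one hu2).symm⟩
      exact mul_mem_of_mem_intermediateField (K.inv_mem (hWK (mem_prod.mp hu).2))
        (mem_prod.mp hu).1
  · rintro (rfl | ⟨z, hz, rfl⟩)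
    · obtain ⟨x, hx, hx0⟩ := exists_mem_ne_zero_of_ne_bot hC
      exact ⟨(x, 0), mem_prod.mpr ⟨hx, W.zero_mem⟩, by simp [hx0],
        (span_eq_span_one_zero (by simp [hx0]) rfl).symm⟩
    · obtain ⟨w, hw, hw0⟩ := exists_mem_ne_zero_of_ne_bot hW
      refine ⟨w • (z, 1), ?_, by simp [hw0], (span_singleton_smul_eq (IsUnit.mk0 _ hw0) _).symm⟩
      exact mem_prod.mpr ⟨mul_mem_of_mem_intermediateField (hWK hw) hz, by simpa using hw⟩

theorem ncard_LSet_prod [Fintype F] [FiniteDimensional F E]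
    (hWK : W ≤ Subalgebra.toSubmodule K.toSubalgebra) (hC : C ≠ ⊥) (hW : W ≠ ⊥) :
    (LSet F ((C.restrictScalars F).prod W)).ncard =
      Fintype.card F ^ finrank F (C.restrictScalars F) + 1 := by
  have : Finite E := Module.finite_of_finite F
  rw [LSet_prod_eq hWK hC hW,
    Set.ncard_insert_of_notMem (by rintro ⟨z, -, h⟩; exact span_one_zero_ne_span_pair_one z h.symm)
      ((Set.toFinite _).image _),
    Set.ncard_image_of_injective _ span_pair_one_injective, ← Nat.card_coe_set_eq,
    ← Nat.card_eq_fintype_card]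
  exact congrArg (· + 1) (Module.natCard_eq_pow_finrank (K := F) (V := C.restrictScalars F))

theorem finrank_span_one_pair {α : E} (hα : α ∉ Set.range (algebraMap F E)) :
    finrank F (span F {(1 : E), α}) = 2 := by
  have hli : LinearIndependent F ![(1 : E), α] :=
    (LinearIndependent.pair_iff' one_ne_zero).mpr fun a h =>
      hα ⟨a, by rw [Algebra.algebraMap_eq_smul_one, h]⟩
  have h := finrank_span_eq_card hli
  rwa [Matrix.range_cons_cons_empty, Fintype.card_fin] at h

theorem coe_prod_span_eq {r : ℕ} (c : Fin r → E) (α : E) :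
    (((span K (Set.range c)).restrictScalars F).prod (span F {(1 : E), α}) : Set (E × E)) =
      {p | ∃ γ : Fin r → K, ∃ l₁ l₂ : F,
        p = (∑ i, c i * (γ i : E), algebraMap F E l₂ + α * algebraMap F E l₁)} := by
  ext ⟨x, y⟩
  simp only [SetLike.mem_coe, mem_prod, restrictScalars_mem, mem_span_range_iff_exists_fun,
    mem_span_pair, Set.mem_ofPred_eq, Prod.mk.injEq]
  constructor
  · rintro ⟨⟨γ, rfl⟩, a, b, rfl⟩
    exact ⟨γ, b, a, by simp [IntermediateField.smul_def, mul_comm],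
      by simp [Algebra.smul_def, mul_comm]⟩
  · rintro ⟨γ, l₁, l₂, rfl, rfl⟩
    exact ⟨⟨γ, by simp [IntermediateField.smul_def, mul_comm]⟩, l₂, l₁,
      by simp [Algebra.smul_def, mul_comm]⟩

end Construction

theorem stmt_15_general (F E : Type*) [Field F] [Fintype F] [Field E] [Algebra F E]
    [FiniteDimensional F E] (q : ℕ) (hq : Fintype.card F = q)
    (K : IntermediateField F E) (s : ℕ) (hs : Module.finrank F K = s)
    (α : E) (hαK : α ∈ K) (hα : α ∉ Set.range (algebraMap F E))
    (r : ℕ) (hr : 1 ≤ r) (c : Fin r → E) (hc : LinearIndependent K c)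
    (U : Submodule F (E × E))
    (hUset : (U : Set (E × E)) =
      {p | ∃ γ : Fin r → K, ∃ l₁ l₂ : F,
        p = (∑ i, c i * (γ i : E), algebraMap F E l₂ + α * algebraMap F E l₁)}) :
    Module.finrank F U = r * s + 2 ∧
    (LSet F U).ncard = q ^ (r * s) + 1 ∧
    Submodule.span E {((1 : E), (0 : E))} ∈ LSet F U ∧
    Module.finrank F
      ↥(U ⊓ (Submodule.span E {((1 : E), (0 : E))}).restrictScalars F) = r * s ∧
    ∀ u ∈ U, u ≠ 0 → u ∉ Submodule.span E {((1 : E), (0 : E))} →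
      Module.finrank F ↥(U ⊓ (Submodule.span E {u}).restrictScalars F) = 2 := by
  set C := span K (Set.range c)
  set W := span F {(1 : E), α}
  obtain rfl : U = (C.restrictScalars F).prod W :=
    SetLike.coe_injective (hUset.trans (coe_prod_span_eq c α).symm)
  have hWK : W ≤ Subalgebra.toSubmodule K.toSubalgebra :=
    span_le.mpr (Set.pair_subset K.one_mem hαK)
  have hC : C ≠ ⊥ := (Submodule.ne_bot_iff _).mpr ⟨c ⟨0, hr⟩, subset_span ⟨_, rfl⟩, hc.ne_zero _⟩
  have hW : W ≠ ⊥ := (Submodule.ne_bot_iff _).mpr ⟨1, subset_span (Set.mem_insert _ _), one_ne_zero⟩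
  have hCrank : finrank F (C.restrictScalars F) = r * s := by
    rw [finrank_restrictScalars_eq_mul, finrank_span_eq_card hc, Fintype.card_fin, hs, mul_comm]
  have hWrank : finrank F W = 2 := finrank_span_one_pair hα
  refine ⟨by rw [Submodule.finrank_prod, hCrank, hWrank], by rw [ncard_LSet_prod hWK hC hW, hq, hCrank],
    ?_, by rw [finrank_inf_span_one_zero, hCrank], fun u hu _ hu1 => ?_⟩
  · rw [LSet_prod_eq hWK hC hW]
    exact Set.mem_insert _ _
  · rw [finrank_inf_span_of_snd_ne_zero hWK hu (mt mem_span_one_zero_iff.mpr hu1), hWrank]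

theorem stmt_15 (F E : Type*) [Field F] [Fintype F] [Field E] [Algebra F E]
    [FiniteDimensional F E] (q : ℕ) (hq : Fintype.card F = q)
    (K : IntermediateField F E) (s : ℕ) (hs : Module.finrank F K = s)
    (α : E) (hαK : α ∈ K) (hα : α ∉ Set.range (algebraMap F E))
    (hK : K = IntermediateField.adjoin F {α})
    (r : ℕ) (hr : 1 ≤ r) (c : Fin r → E) (hc : LinearIndependent K c)
    (U : Submodule F (E × E))
    (hUset : (U : Set (E × E)) =
      {p | ∃ γ : Fin r → K, ∃ l₁ l₂ : F,
        p = (∑ i, c i * (γ i : E), algebraMap F E l₂ + α * algebraMap F E l₁)}) :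
    Module.finrank F U = r * s + 2 ∧
    (LSet F U).ncard = q ^ (r * s) + 1 ∧
    Submodule.span E {((1 : E), (0 : E))} ∈ LSet F U ∧
    Module.finrank F
      ↥(U ⊓ (Submodule.span E {((1 : E), (0 : E))}).restrictScalars F) = r * s ∧
    ∀ u ∈ U, u ≠ 0 → u ∉ Submodule.span E {((1 : E), (0 : E))} →
      Module.finrank F ↥(U ⊓ (Submodule.span E {u}).restrictScalars F) = 2 :=
  stmt_15_general F E q hq K s hs α hαK hα r hr c hc U hUset
end
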